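/- arXiv:0906.2484 — 6 statements merged into one kernel-verified Lean document; each statement's English description precedes it below -/
import Mathlib

section
/- For every δ ∈ (0,1/3], there exists a unique Borel measure μ on ℝ such that for all integers j, all integers n ≥ 0 and all integers 0 ≤ i < 3^n, μ([j + i·3^{−n}, j + (i+1)·3^{−n})) = δ^{n−k(i)} (1−2δ)^{k(i)}, where k(i) denotes the number of digits equal to 1 among the first n ternary (base-3) digits of i. -/
/-!
The measure is the periodic extension of the self-similar probability measure on `[0, 1]` that
puts weights `δ, 1 - 2δ, δ` on the three thirds. Its distribution function `G` is the fixed point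
of the operator `T` that rescales a distribution function into the three thirds with these weights;
`T` is a contraction for the sup norm, so the iterates of `T` converge uniformly. Iterating the
fixed-point equation `G = T G` along the ternary digits of `i` gives
`G((i + y) / 3ⁿ) = G(i / 3ⁿ) + (∏ of the weights of the digits of i) · G(y)`, hence the masses
of triadic intervals. Uniqueness holds because triadic intervals form a π-system generating the
Borel σ-algebra, covered by the unit intervals, which have finite mass.
-/

open MeasureTheory Set

noncomputable section

/-- The number of ternary (base-3) digits of `i` equal to `1`. For `i < 3 ^ n` this equals the
number of digits equal to `1` among the first `n` ternary digits of `i` (with leading zeros). -/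
def ternaryOnes (i : ℕ) : ℕ := (Nat.digits 3 i).count 1

/-- The measure `μ` assigns to each triadic interval `[j + i·3⁻ⁿ, j + (i+1)·3⁻ⁿ)`
(`j ∈ ℤ`, `n ≥ 0`, `0 ≤ i < 3 ^ n`) the mass `δ ^ (n - k(i)) * (1 - 2δ) ^ k(i)`,
where `k(i)` is the number of `1`s among the first `n` ternary digits of `i`. -/
def ternarySpec (δ : ℝ) (μ : Measure ℝ) : Prop :=
  ∀ (j : ℤ) (n i : ℕ), i < 3 ^ n →
    μ (Set.Ico ((j : ℝ) + (i : ℝ) / 3 ^ n) ((j : ℝ) + ((i : ℝ) + 1) / 3 ^ n)) =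
      ENNReal.ofReal (δ ^ (n - ternaryOnes i) * (1 - 2 * δ) ^ ternaryOnes i)

open Filter Topology
open scoped ENNReal

section AdicIntervals

variable {b : ℕ}

def adicIco (b n : ℕ) (m : ℤ) : Set ℝ := Ico (m / b ^ n) ((m + 1) / b ^ n)

def adicIntervals (b : ℕ) : Set (Set ℝ) := range (Function.uncurry (adicIco b))

lemma mem_adicIco_iff (hb : 0 < b) {n : ℕ} {m : ℤ} {x : ℝ} :
    x ∈ adicIco b n m ↔ ⌊x * b ^ n⌋ = m := by
  have : (0 : ℝ) < b ^ n := by positivity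
  rw [adicIco, mem_Ico, Int.floor_eq_iff, div_le_iff₀ this, lt_div_iff₀ this]

lemma floor_mul_pow_eq_ediv (hb : 0 < b) {n n' : ℕ} (h : n ≤ n') (x : ℝ) :
    ⌊x * b ^ n⌋ = ⌊x * b ^ n'⌋ / (b ^ (n' - n) : ℕ) := by
  obtain ⟨k, rfl⟩ := Nat.exists_eq_add_of_le h
  rw [← Int.floor_div_natCast, Nat.add_sub_cancel_left, Nat.cast_pow, pow_add]
  field_simp

lemma adicIco_subset_of_le (hb : 0 < b) {n n' : ℕ} {m m' : ℤ} (h : n ≤ n')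
    (hne : (adicIco b n m ∩ adicIco b n' m').Nonempty) : adicIco b n' m' ⊆ adicIco b n m := by
  obtain ⟨x, hx, hx'⟩ := hne
  intro y hy
  rw [mem_adicIco_iff hb] at hx hx' hy ⊢
  rw [floor_mul_pow_eq_ediv hb h, hy, ← hx', ← floor_mul_pow_eq_ediv hb h, hx]

lemma isPiSystem_adicIntervals (hb : 0 < b) : IsPiSystem (adicIntervals b) := by
  rintro _ ⟨⟨n, m⟩, rfl⟩ _ ⟨⟨n', m'⟩, rfl⟩ hne
  rcases le_total n n' with h | h
  · rw [Function.uncurry_apply_pair, Function.uncurry_apply_pair,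
      inter_eq_right.2 (adicIco_subset_of_le hb h hne)]
    exact mem_range_self (n', m')
  · rw [inter_comm] at hne ⊢
    rw [Function.uncurry_apply_pair, Function.uncurry_apply_pair,
      inter_eq_right.2 (adicIco_subset_of_le hb h hne)]
    exact mem_range_self (n, m)

lemma tendsto_floor_mul_pow_div (hb : 1 < b) (x : ℝ) :
    Tendsto (fun n : ℕ => (⌊x * b ^ n⌋ : ℝ) / b ^ n) atTop (𝓝 x) := by
  have hb' : (1 : ℝ) < b := by exact_mod_cast hb
  have hlow : Tendsto (fun n : ℕ => x - (b : ℝ)⁻¹ ^ n) atTop (𝓝 x) := by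
    simpa using tendsto_const_nhds.sub (tendsto_pow_atTop_nhds_zero_of_lt_one
      (inv_nonneg.2 b.cast_nonneg) (inv_lt_one_of_one_lt₀ hb'))
  refine tendsto_of_tendsto_of_tendsto_of_le_of_le hlow tendsto_const_nhds (fun n => ?_) fun n => ?_
  · have : (0 : ℝ) < b ^ n := by positivity
    rw [inv_pow, le_div_iff₀ this, sub_mul, inv_mul_cancel₀ this.ne']
    linarith [Int.sub_one_lt_floor (x * b ^ n)]
  · rw [div_le_iff₀ (by positivity)]
    exact Int.floor_le _

lemma measurable_floor_mul_pow (hb : 0 < b) (n : ℕ) :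
    Measurable[.generateFrom (adicIntervals b)] fun x : ℝ => ⌊x * b ^ n⌋ :=
  @measurable_to_countable' ℤ ℝ _ _ (.generateFrom (adicIntervals b)) _ fun k => by
    have : (fun x : ℝ => ⌊x * b ^ n⌋) ⁻¹' {k} = adicIco b n k := by
      ext x; exact (mem_adicIco_iff hb).symm
    exact this ▸ MeasurableSpace.measurableSet_generateFrom (mem_range_self (n, k))

lemma borel_eq_generateFrom_adicIntervals (hb : 1 < b) :
    borel ℝ = .generateFrom (adicIntervals b) := by
  refine le_antisymm (fun s (hs : MeasurableSet s) => ?_) (MeasurableSpace.generateFrom_le ?_)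
  · have hid : Measurable[.generateFrom (adicIntervals b)] (id : ℝ → ℝ) :=
      @measurable_of_tendsto_metrizable ℝ ℝ (.generateFrom (adicIntervals b)) _ _ _ _ _ _
        (fun n => (measurable_from_top.comp (measurable_floor_mul_pow (by omega) n)).div_const _)
        (tendsto_pi_nhds.2 (tendsto_floor_mul_pow_div hb))
    exact hid hs
  · rintro _ ⟨⟨n, m⟩, rfl⟩
    exact measurableSet_Ico

lemma Ico_add_div_pow_eq_adicIco (hb : 0 < b) (j : ℤ) (n i : ℕ) :
    Ico (j + i / b ^ n : ℝ) (j + (i + 1) / b ^ n) = adicIco b n (j * b ^ n + i) := by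
  have : (b : ℝ) ^ n ≠ 0 := by positivity
  rw [adicIco]
  push_cast
  congr 1
  · field_simp
  · field_simp; ring

lemma exists_adicIco_eq (hb : 0 < b) (n : ℕ) (m : ℤ) :
    ∃ (j : ℤ) (i : ℕ), i < b ^ n ∧
      adicIco b n m = Ico (j + i / b ^ n : ℝ) (j + (i + 1) / b ^ n) := by
  have hpos : (0 : ℤ) < b ^ n := by positivity
  have hnn := Int.emod_nonneg m hpos.ne'
  refine ⟨m / b ^ n, (m % b ^ n).toNat, ?_, ?_⟩
  · rw [← Int.ofNat_lt, Int.toNat_of_nonneg hnn]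
    exact_mod_cast Int.emod_lt_of_pos m hpos
  rw [Ico_add_div_pow_eq_adicIco hb, Int.toNat_of_nonneg hnn, Int.ediv_mul_add_emod]

theorem MeasureTheory.Measure.ext_of_Ico_add_div_pow (hb : 1 < b) {μ ν : Measure ℝ}
    (hfin : ∀ j : ℤ, μ (Ico j (j + 1)) ≠ ∞)
    (h : ∀ (j : ℤ) (n i : ℕ), i < b ^ n →
      μ (Ico (j + i / b ^ n) (j + (i + 1) / b ^ n)) =
        ν (Ico (j + i / b ^ n) (j + (i + 1) / b ^ n))) :
    μ = ν := by
  have hb₀ : 0 < b := by omega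
  have hunit (j : ℤ) : adicIco b 0 j = Ico (j : ℝ) (j + 1) := by simp [adicIco]
  refine Measure.ext_of_generateFrom_of_cover_subset
    (BorelSpace.measurable_eq.trans (borel_eq_generateFrom_adicIntervals hb))
    (isPiSystem_adicIntervals hb₀) (T := range fun j => adicIco b 0 j) ?_ (countable_range _)
    ?_ ?_ ?_
  · rintro _ ⟨j, rfl⟩
    exact mem_range_self (0, j)
  · refine eq_univ_of_forall fun x => ⟨_, mem_range_self ⌊x⌋, ?_⟩
    simp [mem_adicIco_iff hb₀]
  · rintro _ ⟨j, rfl⟩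
    simpa only [hunit] using hfin j
  · rintro _ ⟨⟨n, m⟩, rfl⟩
    obtain ⟨j, i, hi, hm⟩ := exists_adicIco_eq hb₀ n m
    simpa only [Function.uncurry_apply_pair, hm] using h j n i hi

end AdicIntervals

section UnitCDF

variable {f G : ℝ → ℝ}

/-- Continuous distribution functions of probability measures on `[0, 1]`. -/
structure IsUnitCDF (f : ℝ → ℝ) : Prop where
  monotone : Monotone f
  continuous : Continuous f
  eq_zero : ∀ x ≤ 0, f x = 0
  eq_one : ∀ x, 1 ≤ x → f x = 1

namespace IsUnitCDF

lemma nonneg (hf : IsUnitCDF f) (x : ℝ) : 0 ≤ f x := by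
  rcases le_total x 0 with hx | hx
  · exact (hf.eq_zero x hx).ge
  · exact hf.eq_zero 0 le_rfl ▸ hf.monotone hx

lemma le_one (hf : IsUnitCDF f) (x : ℝ) : f x ≤ 1 := by
  rcases le_total x 1 with hx | hx
  · exact hf.eq_one 1 le_rfl ▸ hf.monotone hx
  · exact (hf.eq_one x hx).le

lemma of_tendsto {F : ℕ → ℝ → ℝ} (hF : ∀ n, IsUnitCDF (F n)) (hG : Continuous G)
    (hlim : ∀ x, Tendsto (F · x) atTop (𝓝 (G x))) : IsUnitCDF G where
  monotone x y hxy := le_of_tendsto_of_tendsto' (hlim x) (hlim y) fun n => (hF n).monotone hxy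
  continuous := hG
  eq_zero x hx := tendsto_nhds_unique (hlim x) (by simp [(hF _).eq_zero x hx])
  eq_one x hx := tendsto_nhds_unique (hlim x) (by simp [(hF _).eq_one x hx])

lemma continuous_floor_add_comp_fract (hG : IsUnitCDF G) :
    Continuous fun x => ⌊x⌋ + G (Int.fract x) := by
  have h : Continuous fun x => G (Int.fract x) - Int.fract x :=
    ContinuousOn.comp_fract (f := fun _ t => G t - t)
      ((hG.continuous.comp continuous_snd).sub continuous_snd).continuousOn continuous_id
      fun _ => by simp [hG.eq_zero 0 le_rfl, hG.eq_one 1 le_rfl]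
  refine (continuous_id.add h).congr fun x => ?_
  simp only [Pi.add_apply, id, Int.fract]
  ring

/-- Its measure is the sum over `j ∈ ℤ` of the translates by `j` of the measure with
distribution function `G`. -/
def stieltjes (hG : IsUnitCDF G) : StieltjesFunction ℝ where
  toFun x := ⌊x⌋ + G (Int.fract x)
  mono' x y hxy := by
    rcases (Int.floor_mono hxy).eq_or_lt with h | h
    · have : Int.fract x ≤ Int.fract y := by simp only [Int.fract, h]; linarith
      simpa [h] using hG.monotone this
    · have : (⌊x⌋ : ℝ) + 1 ≤ ⌊y⌋ := by exact_mod_cast h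
      linarith [hG.le_one (Int.fract x), hG.nonneg (Int.fract y)]
  right_continuous' _ := hG.continuous_floor_add_comp_fract.continuousWithinAt

lemma stieltjes_intCast_add (hG : IsUnitCDF G) (j : ℤ) {t : ℝ} (ht : t ∈ Icc 0 1) :
    hG.stieltjes (j + t) = j + G t := by
  change (⌊(j : ℝ) + t⌋ : ℝ) + G (Int.fract ((j : ℝ) + t)) = j + G t
  rw [Int.floor_intCast_add, Int.fract_intCast_add, Int.cast_add, add_assoc]
  congr 1
  rcases ht.2.lt_or_eq with ht1 | rfl
  · rw [Int.floor_eq_zero_iff.2 ⟨ht.1, ht1⟩, Int.fract_eq_self.2 ⟨ht.1, ht1⟩, Int.cast_zero,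
      zero_add]
  · simp [hG.eq_zero 0 le_rfl, hG.eq_one 1 le_rfl]

lemma measure_stieltjes_Ico (hG : IsUnitCDF G) (j : ℤ) {a b : ℝ} (ha : a ∈ Icc 0 1)
    (hb : b ∈ Icc 0 1) : hG.stieltjes.measure (Ico (j + a) (j + b)) = .ofReal (G b - G a) := by
  have hleft (x : ℝ) : Function.leftLim hG.stieltjes x = hG.stieltjes x :=
    hG.continuous_floor_add_comp_fract.continuousWithinAt.leftLim_eq
  rw [StieltjesFunction.measure_Ico, hleft, hleft, hG.stieltjes_intCast_add j ha,
    hG.stieltjes_intCast_add j hb, add_sub_add_left_eq_sub]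

end IsUnitCDF

lemma isUnitCDF_clamp : IsUnitCDF fun x => max 0 (min x 1) :=
  ⟨fun _ _ h => max_le_max le_rfl (min_le_min h le_rfl), by fun_prop,
    fun _ hx => max_eq_left (min_le_of_left_le hx), fun _ hx => by simp [hx]⟩

end UnitCDF

lemma exists_continuous_tendsto_of_abs_sub_le_pow {F : ℕ → ℝ → ℝ} {ρ : ℝ}
    (hF : ∀ n, Continuous (F n)) (hρ₀ : 0 ≤ ρ) (hρ₁ : ρ < 1)
    (hstep : ∀ n x, |F (n + 1) x - F n x| ≤ ρ ^ n) :
    ∃ G, Continuous G ∧ ∀ x, Tendsto (F · x) atTop (𝓝 (G x)) := by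
  have hsum := summable_geometric_of_lt_one hρ₀ hρ₁
  refine ⟨fun x => F 0 x + ∑' n, (F (n + 1) x - F n x), (hF 0).add
    (continuous_tsum (fun n => (hF (n + 1)).sub (hF n)) hsum hstep), fun x => ?_⟩
  have h := ((hsum.of_norm_bounded (hstep · x)).hasSum.tendsto_sum_nat).const_add (F 0 x)
  simpa [Finset.sum_range_sub (F · x)] using h

section TernaryOp

variable {p : Fin 3 → ℝ} {f g : ℝ → ℝ} {x : ℝ}

/-- If `f` is the distribution function of `μ`, then `ternaryOp p f` is that of the sum of the
copies of `μ` contracted onto the thirds `[d/3, (d+1)/3]` with weights `p d`. -/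
def ternaryOp (p : Fin 3 → ℝ) (f : ℝ → ℝ) (x : ℝ) : ℝ :=
  if x ≤ 1 / 3 then p 0 * f (3 * x)
  else if x ≤ 2 / 3 then p 0 + p 1 * f (3 * x - 1)
  else p 0 + p 1 + p 2 * f (3 * x - 2)

lemma ternaryOp_of_le_one_third (hx : x ≤ 1 / 3) : ternaryOp p f x = p 0 * f (3 * x) :=
  if_pos hx

lemma ternaryOp_of_mem_Icc (hf0 : f 0 = 0) (hf1 : f 1 = 1) (h₁ : 1 / 3 ≤ x) (h₂ : x ≤ 2 / 3) :
    ternaryOp p f x = p 0 + p 1 * f (3 * x - 1) := by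
  rcases h₁.eq_or_lt with rfl | h₁
  · norm_num [ternaryOp, hf0, hf1]
  · rw [ternaryOp, if_neg h₁.not_ge, if_pos h₂]

lemma ternaryOp_of_two_thirds_le (hf0 : f 0 = 0) (hf1 : f 1 = 1) (hx : 2 / 3 ≤ x) :
    ternaryOp p f x = p 0 + p 1 + p 2 * f (3 * x - 2) := by
  rcases hx.eq_or_lt with rfl | hx
  · norm_num [ternaryOp, hf0, hf1]
  · rw [ternaryOp, if_neg (by linarith), if_neg hx.not_ge]

lemma ternaryOp_digit_add_div_three (hf0 : f 0 = 0) (hf1 : f 1 = 1) (d : Fin 3) {y : ℝ}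
    (hy : y ∈ Icc 0 1) :
    ternaryOp p f ((d + y) / 3) = ternaryOp p f (d / 3) + p d * f y := by
  obtain ⟨hy0, hy1⟩ := hy
  fin_cases d
  · simp only [Fin.zero_eta, Nat.cast_zero]
    rw [ternaryOp_of_le_one_third (by linarith), ternaryOp_of_le_one_third (by norm_num)]
    norm_num [hf0, mul_div_cancel₀]
  · simp only [Fin.mk_one, Nat.cast_one]
    rw [ternaryOp_of_mem_Icc hf0 hf1 (by linarith) (by linarith), ternaryOp_of_le_one_third le_rfl]
    norm_num [hf1, mul_div_cancel₀]
  · simp only [Fin.reduceFinMk, Nat.cast_ofNat]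
    rw [ternaryOp_of_two_thirds_le hf0 hf1 (by linarith),
      ternaryOp_of_mem_Icc hf0 hf1 (by norm_num) le_rfl]
    norm_num [hf1, mul_div_cancel₀]

lemma isUnitCDF_ternaryOp (hp : ∀ d, 0 ≤ p d) (hsum : ∑ d, p d = 1) (hf : IsUnitCDF f) :
    IsUnitCDF (ternaryOp p f) := by
  have hfc := hf.continuous
  have hf0 := hf.eq_zero 0 le_rfl
  have hf1 := hf.eq_one 1 le_rfl
  have hmono (d : Fin 3) (c : ℝ) {x y : ℝ} (h : x ≤ y) : c + p d * f x ≤ c + p d * f y :=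
    (add_le_add_iff_left c).2 (mul_le_mul_of_nonneg_left (hf.monotone h) (hp d))
  refine ⟨?_, ?_, fun x hx => ?_, fun x hx => ?_⟩
  · have left : MonotoneOn (ternaryOp p f) (Iic (1 / 3)) := fun x hx y hy hxy => by
      simpa [ternaryOp_of_le_one_third hx, ternaryOp_of_le_one_third hy]
        using hmono 0 0 (by linarith : 3 * x ≤ 3 * y)
    have middle : MonotoneOn (ternaryOp p f) (Icc (1 / 3) (2 / 3)) := fun x hx y hy hxy => by
      rw [ternaryOp_of_mem_Icc hf0 hf1 hx.1 hx.2, ternaryOp_of_mem_Icc hf0 hf1 hy.1 hy.2]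
      exact hmono 1 _ (by linarith)
    have right : MonotoneOn (ternaryOp p f) (Ici (2 / 3)) := fun x hx y hy hxy => by
      rw [ternaryOp_of_two_thirds_le hf0 hf1 hx, ternaryOp_of_two_thirds_le hf0 hf1 hy]
      exact hmono 2 _ (by linarith)
    have := left.union_right middle isGreatest_Iic (isLeast_Icc (by norm_num))
    rw [Iic_union_Icc_eq_Iic (by norm_num)] at this
    exact this.Iic_union_Ici right
  · refine Continuous.if_le (by fun_prop) (Continuous.if_le (by fun_prop) (by fun_prop)
      continuous_id continuous_const fun x hx => ?_) continuous_id continuous_const fun x hx => ?_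
      <;> norm_num [hx, hf0, hf1]
  · rw [ternaryOp_of_le_one_third (by linarith), hf.eq_zero _ (by linarith), mul_zero]
  · rw [ternaryOp_of_two_thirds_le hf0 hf1 (by linarith), hf.eq_one _ (by linarith), mul_one,
      ← hsum, Fin.sum_univ_three]

lemma abs_ternaryOp_sub_le {ρ ε : ℝ} (hp : ∀ d, 0 ≤ p d) (hρ : ∀ d, p d ≤ ρ)
    (hfg : ∀ y, |f y - g y| ≤ ε) (x : ℝ) : |ternaryOp p f x - ternaryOp p g x| ≤ ρ * ε := by
  have key (d : Fin 3) (y : ℝ) : |p d * (f y - g y)| ≤ ρ * ε := by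
    rw [abs_mul, abs_of_nonneg (hp d)]
    exact mul_le_mul (hρ d) (hfg y) (abs_nonneg _) ((hp d).trans (hρ d))
  unfold ternaryOp
  split_ifs
  · simpa only [mul_sub] using key 0 (3 * x)
  · convert key 1 (3 * x - 1) using 2; ring
  · convert key 2 (3 * x - 2) using 2; ring

lemma tendsto_ternaryOp {F : ℕ → ℝ → ℝ} (h : ∀ y, Tendsto (F · y) atTop (𝓝 (f y))) (x : ℝ) :
    Tendsto (fun n => ternaryOp p (F n) x) atTop (𝓝 (ternaryOp p f x)) := by
  unfold ternaryOp
  split_ifs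
  · exact (h _).const_mul _
  · exact ((h _).const_mul _).const_add _
  · exact ((h _).const_mul _).const_add _

theorem exists_isUnitCDF_ternaryOp_eq (hp : ∀ d, 0 ≤ p d) (hp₁ : ∀ d, p d < 1)
    (hsum : ∑ d, p d = 1) : ∃ G, IsUnitCDF G ∧ ternaryOp p G = G := by
  obtain ⟨d₀, hd₀⟩ := Finite.exists_max p
  set F : ℕ → ℝ → ℝ := fun n => (ternaryOp p)^[n] fun x => max 0 (min x 1)
  have hF_succ (n : ℕ) : F (n + 1) = ternaryOp p (F n) := Function.iterate_succ_apply' ..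
  have hF (n : ℕ) : IsUnitCDF (F n) := by
    induction n with
    | zero => exact isUnitCDF_clamp
    | succ n ih => exact hF_succ n ▸ isUnitCDF_ternaryOp hp hsum ih
  have hstep (n : ℕ) : ∀ x, |F (n + 1) x - F n x| ≤ p d₀ ^ n := by
    induction n with
    | zero =>
      intro x
      simpa using abs_sub_le_of_nonneg_of_le ((hF 1).nonneg x) ((hF 1).le_one x)
        ((hF 0).nonneg x) ((hF 0).le_one x)
    | succ n ih =>
      intro x
      have := abs_ternaryOp_sub_le hp hd₀ ih x
      rwa [← hF_succ, ← hF_succ, ← pow_succ'] at this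
  obtain ⟨G, hGc, hlim⟩ := exists_continuous_tendsto_of_abs_sub_le_pow
    (fun n => (hF n).continuous) (hp d₀) (hp₁ d₀) hstep
  refine ⟨G, .of_tendsto hF hGc hlim, funext fun x => tendsto_nhds_unique
    (tendsto_ternaryOp hlim x) ?_⟩
  simpa only [hF_succ] using (tendsto_add_atTop_iff_nat 1).2 (hlim x)

end TernaryOp

section TriadicMass

variable {p : Fin 3 → ℝ} {G : ℝ → ℝ}

/-- `Fin.ofNat 3 (i / 3 ^ k)` is the ternary digit of `i` of weight `3 ^ k`. -/
def triadicMass (p : Fin 3 → ℝ) (n i : ℕ) : ℝ :=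
  ∏ k ∈ Finset.range n, p (Fin.ofNat 3 (i / 3 ^ k))

lemma triadicMass_succ (n i : ℕ) :
    triadicMass p (n + 1) i = p (Fin.ofNat 3 i) * triadicMass p n (i / 3) := by
  simp only [triadicMass, Finset.prod_range_succ', pow_zero, Nat.div_one, pow_succ',
    Nat.div_div_eq_div_mul, mul_comm]

theorem add_div_pow_eq_of_ternaryOp_eq (hfix : ternaryOp p G = G) (hG0 : G 0 = 0)
    (hG1 : G 1 = 1) {n i : ℕ} (hi : i < 3 ^ n) {y : ℝ} (hy : y ∈ Icc 0 1) :
    G ((i + y) / 3 ^ n) = G (i / 3 ^ n) + triadicMass p n i * G y := by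
  induction n generalizing i y with
  | zero =>
    obtain rfl : i = 0 := by simpa using hi
    simp [triadicMass, hG0]
  | succ n ih =>
    set d := Fin.ofNat 3 i
    have hq : i / 3 < 3 ^ n := Nat.div_lt_of_lt_mul (pow_succ' 3 n ▸ hi)
    have hi_eq : (i : ℝ) = 3 * (i / 3 : ℕ) + (d : ℕ) := by
      rw [Fin.val_ofNat]; exact_mod_cast (Nat.div_add_mod i 3).symm
    -- the last digit `d` is peeled off through the fixed-point equation
    have key (z : ℝ) (hz : z ∈ Icc 0 1) : G ((i + z) / 3 ^ (n + 1)) = G ((i / 3 : ℕ) / 3 ^ n) +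
        triadicMass p n (i / 3) * (ternaryOp p G (d / 3) + p d * G z) := by
      have hdz : ((d : ℕ) + z) / 3 ∈ Icc (0 : ℝ) 1 := by
        have : (d : ℕ) ≤ (2 : ℝ) := by exact_mod_cast Nat.le_of_lt_succ d.is_lt
        constructor <;> [exact div_nonneg (add_nonneg (Nat.cast_nonneg _) hz.1) zero_le_three;
          linarith [hz.2]]
      rw [← ternaryOp_digit_add_div_three hG0 hG1 _ hz, hfix, ← ih hq hdz, hi_eq]
      congr 1
      field_simp
      ring
    rw [key y hy, ← add_zero (i : ℝ), key 0 ⟨le_rfl, zero_le_one⟩, hG0, triadicMass_succ]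
    ring

end TriadicMass

theorem exists_measure_Ico_eq_triadicMass {p : Fin 3 → ℝ} (hp : ∀ d, 0 ≤ p d)
    (hp₁ : ∀ d, p d < 1) (hsum : ∑ d, p d = 1) :
    ∃ μ : Measure ℝ, ∀ (j : ℤ) (n i : ℕ), i < 3 ^ n →
      μ (Ico (j + i / 3 ^ n) (j + (i + 1) / 3 ^ n)) = .ofReal (triadicMass p n i) := by
  obtain ⟨G, hG, hfix⟩ := exists_isUnitCDF_ternaryOp_eq hp hp₁ hsum
  have hG1 := hG.eq_one 1 le_rfl
  refine ⟨hG.stieltjes.measure, fun j n i hi => ?_⟩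
  have hi' : (i : ℝ) + 1 ≤ 3 ^ n := by exact_mod_cast hi
  have h3 : (0 : ℝ) < 3 ^ n := by positivity
  rw [hG.measure_stieltjes_Ico j ⟨by positivity, div_le_one_of_le₀ (by linarith) h3.le⟩
    ⟨by positivity, div_le_one_of_le₀ hi' h3.le⟩,
    add_div_pow_eq_of_ternaryOp_eq hfix (hG.eq_zero 0 le_rfl) hG1 hi ⟨zero_le_one, le_rfl⟩, hG1]
  ring_nf

lemma ternaryOnes_eq (i : ℕ) :
    ternaryOnes i = (if i % 3 = 1 then 1 else 0) + ternaryOnes (i / 3) := by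
  rcases Nat.eq_zero_or_pos i with rfl | hi
  · simp [ternaryOnes]
  · rw [ternaryOnes, Nat.digits_def' (by norm_num) hi, List.count_cons, ternaryOnes, add_comm]
    simp only [beq_iff_eq]

lemma ternaryOnes_le {n i : ℕ} (hi : i < 3 ^ n) : ternaryOnes i ≤ n :=
  List.count_le_length.trans ((Nat.digits_length_le_iff (by norm_num) i).2 hi)

lemma triadicMass_eq_pow_mul_pow (δ : ℝ) {n i : ℕ} (hi : i < 3 ^ n) :
    triadicMass ![δ, 1 - 2 * δ, δ] n i =
      δ ^ (n - ternaryOnes i) * (1 - 2 * δ) ^ ternaryOnes i := by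
  induction n generalizing i with
  | zero =>
    obtain rfl : i = 0 := by simpa using hi
    simp [triadicMass, ternaryOnes]
  | succ n ih =>
    have hq : i / 3 < 3 ^ n := Nat.div_lt_of_lt_mul (pow_succ' 3 n ▸ hi)
    have hle := ternaryOnes_le hq
    have hdigit : ![δ, 1 - 2 * δ, δ] (Fin.ofNat 3 i) = if i % 3 = 1 then 1 - 2 * δ else δ := by
      obtain h | h | h : i % 3 = 0 ∨ i % 3 = 1 ∨ i % 3 = 2 := by omega
      all_goals
        rw [show Fin.ofNat 3 i = ⟨i % 3, Nat.mod_lt _ three_pos⟩ from Fin.ext (Fin.val_ofNat _ _)]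
        simp [h]
    rw [triadicMass_succ, ih hq, ternaryOnes_eq i, hdigit]
    split_ifs
    · rw [add_comm 1, Nat.add_sub_add_right, pow_succ]; ring
    · rw [zero_add, Nat.sub_add_comm hle, pow_succ]; ring

/-- For every `δ ∈ (0, 1/3]` there is a unique Borel measure on `ℝ` satisfying the triadic
mass assignment `μ([j + i·3⁻ⁿ, j + (i+1)·3⁻ⁿ)) = δ^(n-k(i)) (1-2δ)^(k(i))`. -/
theorem exists_unique_ternary_measure (δ : ℝ) (hδ0 : 0 < δ) (hδ : δ ≤ 1 / 3) :
    ∃! μ : Measure ℝ, ternarySpec δ μ := by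
  have hp : ∀ d, 0 ≤ ![δ, 1 - 2 * δ, δ] d := by
    intro d; fin_cases d <;> simp <;> linarith
  have hp₁ : ∀ d, ![δ, 1 - 2 * δ, δ] d < 1 := by
    intro d; fin_cases d <;> simp <;> linarith
  obtain ⟨μ, hμ⟩ := exists_measure_Ico_eq_triadicMass hp hp₁ (by simp [Fin.sum_univ_three]; ring)
  have hspec : ternarySpec δ μ := fun j n i hi => by
    rw [hμ j n i hi, triadicMass_eq_pow_mul_pow δ hi]
  refine ⟨μ, hspec, fun ν hν => Measure.ext_of_Ico_add_div_pow (b := 3) (by norm_num)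
    (fun j => ?_) fun j n i hi => ?_⟩
  · simpa using (hν j 0 0 one_pos).trans_ne ENNReal.ofReal_ne_top
  · push_cast
    rw [hν j n i hi, hspec j n i hi]
end
end

section
/- Fix δ ∈ (0,1/3] and let μ be the Borel measure on ℝ determined by μ([j + i·3^{−n}, j + (i+1)·3^{−n})) = δ^{n−k(i)}(1−2δ)^{k(i)} for all integers j, n ≥ 0 and 0 ≤ i < 3^n, where k(i) is the number of digits equal to 1 among the first n ternary digits of i. If I and J are two triadic intervals of the same generation n (i.e. of the same length 3^{−n}) that are adjacent, then μ(I) ≤ ((1−2δ)/δ)·μ(J). -/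
open MeasureTheory Set

noncomputable section

/-- The triadic interval `[i·3⁻ⁿ, (i+1)·3⁻ⁿ)` of generation `n`, `i ∈ ℤ`. -/
def triIcoZ (n : ℕ) (i : ℤ) : Set ℝ := Set.Ico ((i : ℝ) / 3 ^ n) (((i : ℝ) + 1) / 3 ^ n)

/-!
Writing `r = (1 - 2δ)/δ ≥ 1`, the interval of index `3ⁿ j + i` has mass `δⁿ r^k(i)`, so it suffices
that `k` changes by at most one between adjacent indices. Adding one to `i` turns the trailing `2`s
into `0`s and raises the digit before them, which changes `k` by at most one; at the carry into the
next unit interval, from `3ⁿ - 1 = 22…2₃` to `0`, both counts vanish.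
-/

theorem ternaryOnes_three_mul_add (q : ℕ) {r : ℕ} (hr : r < 3) :
    ternaryOnes (3 * q + r) = ternaryOnes q + if r = 1 then 1 else 0 := by
  rcases eq_or_ne r 0 with rfl | hr0
  · rcases eq_or_ne q 0 with rfl | hq0
    · simp [ternaryOnes]
    · rw [ternaryOnes, add_comm, Nat.digits_add 3 (by norm_num) 0 q hr (.inr hq0),
        List.count_cons]
      rfl
  · rw [ternaryOnes, add_comm, Nat.digits_add 3 (by norm_num) r q hr (.inl hr0),
      List.count_cons]
    simp [ternaryOnes]

theorem ternaryOnes_succ_le_and_le_succ (m : ℕ) :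
    ternaryOnes (m + 1) ≤ ternaryOnes m + 1 ∧ ternaryOnes m ≤ ternaryOnes (m + 1) + 1 := by
  induction m using Nat.strong_induction_on with
  | _ m ih =>
    obtain ⟨q, r, hr, rfl⟩ : ∃ q r, r < 3 ∧ m = 3 * q + r :=
      ⟨m / 3, m % 3, Nat.mod_lt _ (by norm_num), (Nat.div_add_mod m 3).symm⟩
    interval_cases r
    · rw [ternaryOnes_three_mul_add q (r := 1) (by norm_num),
        ternaryOnes_three_mul_add q (r := 0) (by norm_num)]
      norm_num
      omega
    · rw [ternaryOnes_three_mul_add q (r := 2) (by norm_num),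
        ternaryOnes_three_mul_add q (r := 1) (by norm_num)]
      norm_num
      omega
    · have hq := ih q (by omega)
      rw [show 3 * q + 2 + 1 = 3 * (q + 1) + 0 by ring,
        ternaryOnes_three_mul_add (q + 1) (r := 0) (by norm_num),
        ternaryOnes_three_mul_add q (r := 2) (by norm_num)]
      norm_num
      omega

theorem ternaryOnes_three_pow_sub_one (n : ℕ) : ternaryOnes (3 ^ n - 1) = 0 := by
  induction n with
  | zero => simp [ternaryOnes]
  | succ n ih =>
    have hpos : 1 ≤ 3 ^ n := Nat.one_le_pow _ _ (by norm_num)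
    rw [show 3 ^ (n + 1) - 1 = 3 * (3 ^ n - 1) + 2 by rw [pow_succ]; omega,
      ternaryOnes_three_mul_add _ (by norm_num), ih]
    norm_num

theorem ternaryOnes_le_of_lt_three_pow {i n : ℕ} (h : i < 3 ^ n) : ternaryOnes i ≤ n :=
  List.count_le_length.trans ((Nat.digits_length_le_iff (by norm_num) i).2 h)

def triadicWeight (δ : ℝ) (n k : ℕ) : ℝ := δ ^ (n - k) * (1 - 2 * δ) ^ k

theorem triadicWeight_eq {δ : ℝ} (hδ : δ ≠ 0) {n k : ℕ} (hk : k ≤ n) :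
    triadicWeight δ n k = δ ^ n * ((1 - 2 * δ) / δ) ^ k := by
  rw [triadicWeight, div_pow, pow_sub₀ δ hδ hk]
  field_simp

theorem ofReal_triadicWeight_le {δ : ℝ} (hδ0 : 0 < δ) (hδ : δ ≤ 1 / 3) {n k k' : ℕ}
    (hkk' : k ≤ k' + 1) (hk : k ≤ n) (hk' : k' ≤ n) :
    ENNReal.ofReal (triadicWeight δ n k) ≤
      ENNReal.ofReal ((1 - 2 * δ) / δ) * ENNReal.ofReal (triadicWeight δ n k') := by
  have hratio : 1 ≤ (1 - 2 * δ) / δ := by rw [le_div_iff₀ hδ0]; linarith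
  rw [← ENNReal.ofReal_mul (by positivity)]
  refine ENNReal.ofReal_le_ofReal ?_
  calc triadicWeight δ n k = δ ^ n * ((1 - 2 * δ) / δ) ^ k := triadicWeight_eq hδ0.ne' hk
    _ ≤ δ ^ n * ((1 - 2 * δ) / δ) ^ (k' + 1) := by gcongr
    _ = (1 - 2 * δ) / δ * triadicWeight δ n k' := by
      rw [triadicWeight_eq hδ0.ne' hk']; ring

theorem triIcoZ_three_pow_mul_add (n : ℕ) (j : ℤ) (i : ℕ) :
    triIcoZ n (3 ^ n * j + i) = Ico ((j : ℝ) + i / 3 ^ n) ((j : ℝ) + (i + 1) / 3 ^ n) := by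
  have h3 : (3 : ℝ) ^ n ≠ 0 := by positivity
  unfold triIcoZ
  push_cast
  congr 1
  · field_simp
  · field_simp
    ring

theorem measure_triIcoZ_three_pow_mul_add {δ : ℝ} {μ : Measure ℝ} (hμ : ternarySpec δ μ)
    {n : ℕ} (j : ℤ) {i : ℕ} (hi : i < 3 ^ n) :
    μ (triIcoZ n (3 ^ n * j + i)) = ENNReal.ofReal (triadicWeight δ n (ternaryOnes i)) := by
  rw [triIcoZ_three_pow_mul_add, hμ j n i hi, triadicWeight]

theorem exists_eq_three_pow_mul_add (n : ℕ) (a : ℤ) :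
    ∃ j : ℤ, ∃ i : ℕ, i < 3 ^ n ∧ a = 3 ^ n * j + i := by
  have hN : (0 : ℤ) < 3 ^ n := by positivity
  obtain ⟨i, hi⟩ := Int.eq_ofNat_of_zero_le (Int.emod_nonneg a hN.ne')
  refine ⟨a / 3 ^ n, i, ?_, ?_⟩
  · have := Int.emod_lt_of_pos a hN
    rw [hi] at this
    exact_mod_cast this
  · rw [← hi, Int.mul_ediv_add_emod]

theorem measure_triIcoZ_le_succ_and_succ_le {δ : ℝ} (hδ0 : 0 < δ) (hδ : δ ≤ 1 / 3)
    {μ : Measure ℝ} (hμ : ternarySpec δ μ) (n : ℕ) (a : ℤ) :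
    μ (triIcoZ n a) ≤ ENNReal.ofReal ((1 - 2 * δ) / δ) * μ (triIcoZ n (a + 1)) ∧
      μ (triIcoZ n (a + 1)) ≤ ENNReal.ofReal ((1 - 2 * δ) / δ) * μ (triIcoZ n a) := by
  obtain ⟨j, i, hi, rfl⟩ := exists_eq_three_pow_mul_add n a
  obtain ⟨j', i', hi', hsucc, hk⟩ : ∃ j' : ℤ, ∃ i' : ℕ, i' < 3 ^ n ∧
      3 ^ n * j + i + 1 = 3 ^ n * j' + i' ∧
      (ternaryOnes i ≤ ternaryOnes i' + 1 ∧ ternaryOnes i' ≤ ternaryOnes i + 1) := by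
    rcases (Nat.succ_le_of_lt hi).lt_or_eq with hlt | hlast
    · exact ⟨j, i + 1, hlt, by push_cast; ring, (ternaryOnes_succ_le_and_le_succ i).symm⟩
    · have hi_eq : i = 3 ^ n - 1 := by omega
      refine ⟨j + 1, 0, by positivity, ?_, ?_⟩
      · have : (i : ℤ) + 1 = 3 ^ n := by exact_mod_cast hlast
        linear_combination this
      · rw [hi_eq, ternaryOnes_three_pow_sub_one]
        simp [ternaryOnes]
  have hkn := ternaryOnes_le_of_lt_three_pow hi
  have hkn' := ternaryOnes_le_of_lt_three_pow hi'
  rw [hsucc, measure_triIcoZ_three_pow_mul_add hμ j hi,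
    measure_triIcoZ_three_pow_mul_add hμ j' hi']
  exact ⟨ofReal_triadicWeight_le hδ0 hδ hk.1 hkn hkn',
    ofReal_triadicWeight_le hδ0 hδ hk.2 hkn' hkn⟩

/-- For two adjacent triadic intervals `I`, `J` of the same generation (i.e. with indices
differing by one), `μ(I) ≤ ((1-2δ)/δ) · μ(J)`. -/
theorem ternary_measure_adjacent_ratio (δ : ℝ) (hδ0 : 0 < δ) (hδ : δ ≤ 1 / 3)
    (μ : Measure ℝ) (hμ : ternarySpec δ μ) (n : ℕ) (i i' : ℤ)
    (hadj : i' = i + 1 ∨ i = i' + 1) :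
    μ (triIcoZ n i) ≤ ENNReal.ofReal ((1 - 2 * δ) / δ) * μ (triIcoZ n i') := by
  rcases hadj with rfl | rfl
  · exact (measure_triIcoZ_le_succ_and_succ_le hδ0 hδ hμ n i).1
  · exact (measure_triIcoZ_le_succ_and_succ_le hδ0 hδ hμ n i').2
end
end

section
/- Let n ≥ 1 be an integer and let 0 < p ≤ a < 1. Then Σ_{m : an ≤ m ≤ n} C(n,m) p^m (1−p)^{n−m} ≤ e^{−n·H(a,p)}, where H(a,p) = a·log(a/p) + (1−a)·log((1−a)/(1−p)) and C(n,m) is the binomial coefficient. -/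
/-!
Chernoff's method: for every `t ≥ 0`, Markov's inequality applied to `exp (t X)` bounds the tail
`P(X ≥ a n)` of a binomial variable by `exp (-t a n) (p eᵗ + 1 - p)ⁿ`. The tilt
`eᵗ = a (1 - p) / (p (1 - a))`, which is `≥ 1` exactly when `p ≤ a`, makes the factor
`exp (-t a) (p eᵗ + 1 - p)` equal to `exp (-H(a,p))`.
-/

open Finset Real

noncomputable def bernoulliKL (a p : ℝ) : ℝ :=
  a * log (a / p) + (1 - a) * log ((1 - a) / (1 - p))

theorem sum_filter_le_exp_mul_sum_exp {ι : Type*} (s : Finset ι) (f w : ι → ℝ)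
    (hw : ∀ i ∈ s, 0 ≤ w i) {t : ℝ} (ht : 0 ≤ t) (c : ℝ) :
    ∑ i ∈ s with c ≤ f i, w i ≤ exp (-(t * c)) * ∑ i ∈ s, exp (t * f i) * w i := by
  rw [mul_sum]
  calc ∑ i ∈ s with c ≤ f i, w i
      ≤ ∑ i ∈ s with c ≤ f i, exp (-(t * c)) * (exp (t * f i) * w i) := by
        refine sum_le_sum fun i hi => ?_
        obtain ⟨his, hci⟩ := mem_filter.mp hi
        have hexp : 1 ≤ exp (-(t * c)) * exp (t * f i) := by
          rw [← exp_add]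
          exact one_le_exp (by nlinarith)
        nlinarith [hw i his]
    _ ≤ ∑ i ∈ s, exp (-(t * c)) * (exp (t * f i) * w i) :=
        sum_le_sum_of_subset_of_nonneg (filter_subset _ _) fun i hi _ => by
          have := hw i hi
          positivity

theorem sum_exp_mul_binomial (n : ℕ) (p t : ℝ) :
    ∑ m ∈ range (n + 1), exp (t * m) * (n.choose m * p ^ m * (1 - p) ^ (n - m)) =
      (p * exp t + (1 - p)) ^ n := by
  rw [add_pow]
  refine sum_congr rfl fun m _ => ?_
  rw [mul_comm t, exp_nat_mul]
  ring

theorem one_le_tilt {a p : ℝ} (hp : 0 < p) (hpa : p ≤ a) (ha : a < 1) :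
    1 ≤ a * (1 - p) / (p * (1 - a)) := by
  rw [one_le_div₀ (by nlinarith)]
  nlinarith

theorem exp_neg_mul_mul_mgf_tilt {a p : ℝ} (ha0 : 0 < a) (ha1 : a < 1) (hp0 : 0 < p)
    (hp1 : p < 1) :
    exp (-(log (a * (1 - p) / (p * (1 - a))) * a)) *
        (p * exp (log (a * (1 - p) / (p * (1 - a)))) + (1 - p)) =
      exp (-bernoulliKL a p) := by
  have h1a : 0 < 1 - a := by linarith
  have h1p : 0 < 1 - p := by linarith
  have hlog : log (a * (1 - p) / (p * (1 - a))) = log (a / p) - log ((1 - a) / (1 - p)) := by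
    rw [← log_div (by positivity) (by positivity)]
    congr 1
    field_simp
  have hmgf : p * exp (log (a * (1 - p) / (p * (1 - a)))) + (1 - p) =
      exp (-log ((1 - a) / (1 - p))) := by
    rw [exp_log (by positivity), exp_neg, exp_log (by positivity), inv_div]
    field_simp
    ring
  rw [hmgf, ← exp_add, hlog, bernoulliKL]
  ring_nf

theorem binomial_tail_bound_general (n : ℕ) (a p : ℝ)
    (hp : 0 < p) (hpa : p ≤ a) (ha : a < 1) :
    ∑ m ∈ (Finset.range (n + 1)).filter (fun m : ℕ => a * n ≤ (m : ℝ)),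
        (n.choose m : ℝ) * p ^ m * (1 - p) ^ (n - m) ≤
      Real.exp (-(n : ℝ) *
        (a * Real.log (a / p) + (1 - a) * Real.log ((1 - a) / (1 - p)))) := by
  have hp1 : p < 1 := hpa.trans_lt ha
  set t := log (a * (1 - p) / (p * (1 - a)))
  have ht : 0 ≤ t := log_nonneg (one_le_tilt hp hpa ha)
  calc _ ≤ exp (-(t * (a * n))) * ∑ m ∈ range (n + 1),
          exp (t * m) * (n.choose m * p ^ m * (1 - p) ^ (n - m)) :=
        sum_filter_le_exp_mul_sum_exp _ (fun m : ℕ => (m : ℝ)) _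
          (fun m _ => by have := sub_pos.mpr hp1; positivity) ht _
    _ = (exp (-(t * a)) * (p * exp t + (1 - p))) ^ n := by
        rw [sum_exp_mul_binomial, mul_pow, ← exp_nat_mul]
        ring_nf
    _ = exp (-n * bernoulliKL a p) := by
        rw [exp_neg_mul_mul_mgf_tilt (hp.trans_le hpa) ha hp hp1, ← exp_nat_mul]
        ring_nf

/-- Cramér's bound for the binomial tail: for `0 < p ≤ a < 1` and `n ≥ 1`,
`Σ_{m : an ≤ m ≤ n} C(n,m) pᵐ (1-p)^{n-m} ≤ exp(-n·H(a,p))`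
with `H(a,p) = a log(a/p) + (1-a) log((1-a)/(1-p))`. -/
theorem binomial_tail_bound (n : ℕ) (hn : 1 ≤ n) (a p : ℝ)
    (hp : 0 < p) (hpa : p ≤ a) (ha : a < 1) :
    ∑ m ∈ (Finset.range (n + 1)).filter (fun m : ℕ => a * n ≤ (m : ℝ)),
        (n.choose m : ℝ) * p ^ m * (1 - p) ^ (n - m) ≤
      Real.exp (-(n : ℝ) *
        (a * Real.log (a / p) + (1 - a) * Real.log ((1 - a) / (1 - p)))) :=
  binomial_tail_bound_general n a p hp hpa ha
end

section
/- For all real numbers a, p with 0 < p ≤ a < 1, one has H(a,p) ≥ log(1/p) − (1−a)·[log((1−p)/p) + 1 + log(1/(1−a))], where H(a,p) = a·log(a/p) + (1−a)·log((1−a)/(1−p)). -/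
open Real InformationTheory

/-! The difference between the two sides is exactly `klFun a = a log a + 1 - a`: all the terms
in `log p` and `log (1 - p)` cancel. The bound is therefore the inequality `a - 1 ≤ a log a`. -/

lemma Real.mul_log_div {x y : ℝ} (hy : y ≠ 0) : x * log (x / y) = x * log x - x * log y := by
  rcases eq_or_ne x 0 with rfl | hx
  · simp
  · rw [log_div hx hy, mul_sub]

lemma relEntropy_eq_add_klFun (a : ℝ) {p : ℝ} (hp₀ : p ≠ 0) (hp₁ : 1 - p ≠ 0) :
    a * log (a / p) + (1 - a) * log ((1 - a) / (1 - p)) =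
      log (1 / p) - (1 - a) * (log ((1 - p) / p) + 1 + log (1 / (1 - a))) + klFun a := by
  rw [mul_log_div hp₀, mul_log_div hp₁, log_div hp₁ hp₀, one_div, one_div, log_inv, log_inv,
    klFun]
  ring

/-- For `0 < p ≤ a < 1`, the relative entropy
`H(a,p) = a log(a/p) + (1-a) log((1-a)/(1-p))` satisfies
`H(a,p) ≥ log(1/p) - (1-a)·[log((1-p)/p) + 1 + log(1/(1-a))]`. -/
theorem entropy_lower_bound (a p : ℝ) (hp : 0 < p) (hpa : p ≤ a) (ha : a < 1) :
    Real.log (1 / p) - (1 - a) * (Real.log ((1 - p) / p) + 1 + Real.log (1 / (1 - a))) ≤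
      a * Real.log (a / p) + (1 - a) * Real.log ((1 - a) / (1 - p)) := by
  rw [relEntropy_eq_add_klFun a hp.ne' (by linarith)]
  exact le_add_of_nonneg_right (klFun_nonneg (hp.le.trans hpa))
end

section
/- Fix δ ∈ (0,1/3] and integers 0 ≤ k ≤ n with 2δn ≤ k ≤ (2/3)n. Let μ and K(n,k) be as in the triadic construction, and let 𝒢(n,k) be the set of bounded connected components of ℝ ∖ K(n,k) (the gaps of K(n,k)). Then #𝒢(n,k) ≤ e^{k[1 + log(1/δ)]}, and the total length of the gaps satisfies Σ_{I ∈ 𝒢(n,k)} |I| ≤ 1. -/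
/-!
`K(n,k)` is a finite union of half-open intervals `[a, b)`, so the supremum of a gap lies in
`K(n,k)`, hence is the left endpoint of a heavy interval, and two gaps with the same supremum meet.
Thus there are at most as many gaps as heavy intervals. These are disjoint, each of mass at least
`δ^k (1-2δ)^(n-k)`, and `μ [0,1) = 1`, so by Markov's inequality there are at most
`δ^(-k) (1-2δ)^(-(n-k)) ≤ δ^(-k) exp (2δ(n-k)/(1-2δ)) ≤ δ^(-k) e^k` of them when `2δn ≤ k`.
The gaps are disjoint subsets of `[0,1]`, which bounds their total length.
-/

open MeasureTheory Set

noncomputable section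

/-- The triadic interval `[i·3⁻ⁿ, (i+1)·3⁻ⁿ) ⊆ [0,1)` of generation `n`, `0 ≤ i < 3 ^ n`. -/
def triIco (n i : ℕ) : Set ℝ := Set.Ico ((i : ℝ) / 3 ^ n) (((i : ℝ) + 1) / 3 ^ n)

/-- Indices `0 ≤ i < 3 ^ n` of the "heavy" triadic intervals of generation `n` inside `[0,1)`,
those with `μ(I) ≥ δ ^ k · (1 - 2δ) ^ (n - k)`. -/
def goodIdx (δ : ℝ) (μ : Measure ℝ) (n k : ℕ) : Set ℕ :=
  {i | i < 3 ^ n ∧ ENNReal.ofReal (δ ^ k * (1 - 2 * δ) ^ (n - k)) ≤ μ (triIco n i)}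

/-- `K(n,k)`: the union of the triadic intervals `I ⊆ [0,1)` of generation `n` with
`μ(I) ≥ δ ^ k · (1 - 2δ) ^ (n - k)`. -/
def Kset (δ : ℝ) (μ : Measure ℝ) (n k : ℕ) : Set ℝ := ⋃ i ∈ goodIdx δ μ n k, triIco n i

/-- The gaps of a set `K ⊆ ℝ`: the bounded connected components of `ℝ \ K`. -/
def gaps (K : Set ℝ) : Set (Set ℝ) :=
  {C | Bornology.IsBounded C ∧ ∃ x ∈ Kᶜ, C = connectedComponentIn Kᶜ x}

open Filter Function Topology

section Gaps

variable {K C C' s : Set ℝ} {y : ℝ}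

lemma nonempty_of_mem_gaps (hC : C ∈ gaps K) : C.Nonempty := by
  obtain ⟨-, x, hx, rfl⟩ := hC
  exact ⟨x, mem_connectedComponentIn hx⟩

lemma subset_compl_of_mem_gaps (hC : C ∈ gaps K) : C ⊆ Kᶜ := by
  obtain ⟨-, x, -, rfl⟩ := hC
  exact connectedComponentIn_subset _ _

lemma isPreconnected_of_mem_gaps (hC : C ∈ gaps K) : IsPreconnected C := by
  obtain ⟨-, x, -, rfl⟩ := hC
  exact isPreconnected_connectedComponentIn

lemma connectedComponentIn_eq_of_mem_gaps (hC : C ∈ gaps K) (hy : y ∈ C) :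
    connectedComponentIn Kᶜ y = C := by
  obtain ⟨-, x, -, rfl⟩ := hC
  exact (connectedComponentIn_eq hy).symm

lemma IsPreconnected.subset_of_mem_gaps (hs : IsPreconnected s) (hC : C ∈ gaps K)
    (hys : y ∈ s) (hyC : y ∈ C) (hsK : s ⊆ Kᶜ) : s ⊆ C :=
  connectedComponentIn_eq_of_mem_gaps hC hyC ▸ hs.subset_connectedComponentIn hys hsK

lemma disjoint_of_mem_gaps (hC : C ∈ gaps K) (hC' : C' ∈ gaps K) (hne : C ≠ C') :
    Disjoint C C' :=
  Set.disjoint_left.2 fun _ hy hy' =>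
    hne ((connectedComponentIn_eq_of_mem_gaps hC hy).symm.trans
      (connectedComponentIn_eq_of_mem_gaps hC' hy'))

lemma subset_Icc_of_mem_gaps {a b : ℝ} (hK : K ⊆ Icc a b) (hC : C ∈ gaps K) :
    C ⊆ Icc a b := by
  intro y hy
  by_contra hyab
  rcases not_and_or.1 hyab with hya | hyb
  · have hray : Iic y ⊆ Kᶜ := fun z hz hzK => hya (hz.trans' (hK hzK).1)
    exact not_bddBelow_Iic _ (hC.1.subset
      (isPreconnected_Iic.subset_of_mem_gaps hC self_mem_Iic hy hray)).bddBelow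
  · have hray : Ici y ⊆ Kᶜ := fun z hz hzK => hyb ((hK hzK).2.trans' hz)
    exact not_bddAbove_Ici _ (hC.1.subset
      (isPreconnected_Ici.subset_of_mem_gaps hC self_mem_Ici hy hray)).bddAbove

lemma tsum_volume_gaps_le {a b : ℝ} (hK : K ⊆ Icc a b) :
    ∑' I : gaps K, volume (I : Set ℝ) ≤ ENNReal.ofReal (b - a) :=
  calc ∑' I : gaps K, volume (I : Set ℝ) ≤ volume (⋃ I : gaps K, (I : Set ℝ)) :=
        tsum_meas_le_meas_iUnion_of_disjoint volume
          (fun I => (isPreconnected_of_mem_gaps I.2).ordConnected.measurableSet)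
          (fun I J hIJ => disjoint_of_mem_gaps I.2 J.2 (Subtype.coe_injective.ne hIJ))
    _ ≤ volume (Icc a b) := measure_mono (iUnion_subset fun I => subset_Icc_of_mem_gaps hK I.2)
    _ = ENNReal.ofReal (b - a) := Real.volume_Icc

lemma sSup_mem_of_mem_gaps (hK : ∀ x ∉ K, Kᶜ ∈ 𝓝[≥] x) (hC : C ∈ gaps K) : sSup C ∈ K := by
  have hne := nonempty_of_mem_gaps hC
  have hbdd := hC.1.bddAbove
  by_contra hsK
  have hsC : sSup C ∈ C := by
    have hins : IsPreconnected (insert (sSup C) C) :=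
      (isPreconnected_of_mem_gaps hC).subset_closure (subset_insert _ _)
        (insert_subset (csSup_mem_closure hne hbdd) subset_closure)
    obtain ⟨y, hy⟩ := hne
    exact hins.subset_of_mem_gaps hC (mem_insert_of_mem _ hy) hy
      (insert_subset hsK (subset_compl_of_mem_gaps hC)) (mem_insert _ _)
  obtain ⟨u, hu, hIco⟩ := mem_nhdsGE_iff_exists_Ico_subset.1 (hK _ hsK)
  have hsub : Ico (sSup C) u ⊆ C :=
    isPreconnected_Ico.subset_of_mem_gaps hC (left_mem_Ico.2 hu) hsC hIco
  obtain ⟨z, hz, hzu⟩ := exists_between (mem_Ioi.1 hu)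
  exact (le_csSup hbdd (hsub ⟨hz.le, hzu⟩)).not_gt hz

lemma eq_of_mem_gaps_of_sSup_eq (hC : C ∈ gaps K) (hC' : C' ∈ gaps K) (hK : sSup C ∈ K)
    (h : sSup C = sSup C') : C = C' := by
  wlog hyy : ∃ y ∈ C, ∃ y' ∈ C', y ≤ y' generalizing C C'
  · obtain ⟨y, hy⟩ := nonempty_of_mem_gaps hC
    obtain ⟨y', hy'⟩ := nonempty_of_mem_gaps hC'
    refine (this hC' hC (h ▸ hK) h.symm ⟨y', hy', y, hy, ?_⟩).symm
    by_contra hlt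
    exact hyy ⟨y, hy, y', hy', (not_le.1 hlt).le⟩
  obtain ⟨y, hy, y', hy', hyy'⟩ := hyy
  have hy'lt : y' < sSup C := by
    rw [h]
    refine (le_csSup hC'.1.bddAbove hy').lt_of_ne fun heq => subset_compl_of_mem_gaps hC' hy' ?_
    rwa [heq, ← h]
  obtain ⟨z, hz, hy'z⟩ := exists_lt_of_lt_csSup (nonempty_of_mem_gaps hC) hy'lt
  have hy'C : y' ∈ C := (isPreconnected_of_mem_gaps hC).ordConnected.out hy hz ⟨hyy', hy'z.le⟩
  by_contra hne
  exact disjoint_left.1 (disjoint_of_mem_gaps hC hC' hne) hy'C hy'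

end Gaps

section FiniteUnionIco

variable {ι : Type*} {a b : ι → ℝ} {G : Set ι}

lemma compl_biUnion_Ico_mem_nhdsGE (hG : G.Finite) {x : ℝ}
    (hx : x ∉ ⋃ i ∈ G, Ico (a i) (b i)) : (⋃ i ∈ G, Ico (a i) (b i))ᶜ ∈ 𝓝[≥] x := by
  rw [compl_iUnion₂]
  refine (biInter_mem hG).2 fun i hi => ?_
  have hxi : x ∉ Ico (a i) (b i) := fun h => hx (mem_biUnion hi h)
  rcases lt_or_ge x (a i) with hxa | hax
  · exact mem_nhdsWithin_of_mem_nhds <| mem_of_superset (Iio_mem_nhds hxa)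
      fun z hz hzi => (not_le.2 hz) hzi.1
  · have hbx : b i ≤ x := not_lt.1 fun hxb => hxi ⟨hax, hxb⟩
    exact mem_of_superset self_mem_nhdsWithin fun z hz hzi => (not_lt.2 (hbx.trans hz)) hzi.2

lemma sSup_mem_image_of_mem_gaps_biUnion_Ico (hG : G.Finite) {C : Set ℝ}
    (hC : C ∈ gaps (⋃ i ∈ G, Ico (a i) (b i))) : sSup C ∈ a '' G := by
  obtain ⟨i, hi, hsi⟩ := mem_iUnion₂.1 (sSup_mem_of_mem_gaps
    (fun _ => compl_biUnion_Ico_mem_nhdsGE hG) hC)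
  have hlt : ∀ y ∈ C, y < a i := fun y hy => not_le.1 fun hay =>
    subset_compl_of_mem_gaps hC hy
      (mem_biUnion hi ⟨hay, (le_csSup hC.1.bddAbove hy).trans_lt hsi.2⟩)
  exact ⟨i, hi, le_antisymm hsi.1 (csSup_le (nonempty_of_mem_gaps hC) fun y hy => (hlt y hy).le)⟩

lemma ncard_gaps_biUnion_Ico_le (hG : G.Finite) :
    (gaps (⋃ i ∈ G, Ico (a i) (b i))).ncard ≤ G.ncard :=
  (ncard_le_ncard_of_injOn sSup (fun _ => sSup_mem_image_of_mem_gaps_biUnion_Ico hG)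
    (fun _ hC _ hC' h => eq_of_mem_gaps_of_sSup_eq hC hC'
      (sSup_mem_of_mem_gaps (fun _ => compl_biUnion_Ico_mem_nhdsGE hG) hC) h)
    (hG.image a)).trans (ncard_image_le hG)

end FiniteUnionIco

lemma Set.Finite.ncard_mul_le_measure_biUnion {α ι : Type*} [MeasurableSpace α] {μ : Measure α}
    {s : ι → Set α} {G : Set ι} (hG : G.Finite) (hd : G.PairwiseDisjoint s)
    (hm : ∀ i ∈ G, MeasurableSet (s i)) {c : ENNReal} (hc : ∀ i ∈ G, c ≤ μ (s i)) :
    G.ncard * c ≤ μ (⋃ i ∈ G, s i) := by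
  lift G to Finset ι using hG
  rw [ncard_coe_finset, Finset.set_biUnion_coe, measure_biUnion_finset hd hm]
  calc (G.card : ENNReal) * c = ∑ _i ∈ G, c := by rw [Finset.sum_const, nsmul_eq_mul]
    _ ≤ ∑ i ∈ G, μ (s i) := Finset.sum_le_sum hc

lemma Real.inv_one_sub_pow_le_exp {x : ℝ} (hx : x < 1) (m : ℕ) :
    ((1 - x) ^ m)⁻¹ ≤ Real.exp (m * (x / (1 - x))) := by
  have hpos : 0 < 1 - x := by linarith
  rw [Real.exp_nat_mul, ← inv_pow]
  refine pow_le_pow_left₀ (inv_nonneg.2 hpos.le) ?_ m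
  calc (1 - x)⁻¹ = x / (1 - x) + 1 := by field_simp; ring
    _ ≤ Real.exp (x / (1 - x)) := Real.add_one_le_exp _

lemma pairwise_disjoint_triIco (n : ℕ) : Pairwise (Disjoint on triIco n) := by
  have hmono : Monotone fun i : ℕ => (i : ℝ) / 3 ^ n := fun i j hij => by
    dsimp only
    gcongr
  intro i j hij
  simpa [onFun, triIco] using hmono.pairwise_disjoint_on_Ico_succ hij

section Triadic

variable {δ : ℝ} {μ : Measure ℝ} {n k : ℕ}

lemma triIco_subset_Ico {i : ℕ} (hi : i < 3 ^ n) : triIco n i ⊆ Ico 0 1 := by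
  have hi' : (i : ℝ) + 1 ≤ 3 ^ n := by exact_mod_cast hi
  exact Ico_subset_Ico (by positivity) ((div_le_one (by positivity)).2 hi')

lemma Kset_subset_Ico : Kset δ μ n k ⊆ Ico 0 1 :=
  iUnion₂_subset fun _ hi => triIco_subset_Ico hi.1

lemma finite_goodIdx : (goodIdx δ μ n k).Finite :=
  (finite_lt_nat (3 ^ n)).subset fun _ hi => hi.1

lemma measure_Ico_zero_one (hμ : ternarySpec δ μ) : μ (Ico 0 1) = 1 := by
  simpa [ternaryOnes] using hμ 0 0 0 one_pos

lemma ncard_goodIdx_mul_le (hμ : ternarySpec δ μ) :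
    ((goodIdx δ μ n k).ncard : ℝ) * (δ ^ k * (1 - 2 * δ) ^ (n - k)) ≤ 1 := by
  have hmass := (finite_goodIdx : (goodIdx δ μ n k).Finite).ncard_mul_le_measure_biUnion
    ((pairwise_disjoint_triIco n).set_pairwise _) (fun _ _ => measurableSet_Ico) fun _ hi => hi.2
  rw [← ENNReal.ofReal_le_one, ENNReal.ofReal_mul (Nat.cast_nonneg _), ENNReal.ofReal_natCast]
  calc _ ≤ μ (Kset δ μ n k) := hmass
    _ ≤ μ (Ico 0 1) := measure_mono Kset_subset_Ico
    _ = 1 := measure_Ico_zero_one hμ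

lemma inv_threshold_le_exp (hδ0 : 0 < δ) (hδ : δ < 1 / 2) (hk : 2 * δ * n ≤ k) :
    (δ ^ k * (1 - 2 * δ) ^ (n - k))⁻¹ ≤ Real.exp (k * (1 + Real.log (1 / δ))) := by
  have hm : ((n - k : ℕ) : ℝ) * (2 * δ / (1 - 2 * δ)) ≤ k := by
    rw [mul_div_assoc', div_le_iff₀ (by linarith)]
    rcases le_total k n with hkn | hnk
    · rw [Nat.cast_sub hkn]
      nlinarith
    · rw [Nat.sub_eq_zero_of_le hnk, Nat.cast_zero, zero_mul]
      nlinarith [(Nat.cast_nonneg k : (0 : ℝ) ≤ k)]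
  calc (δ ^ k * (1 - 2 * δ) ^ (n - k))⁻¹ = (1 / δ) ^ k * ((1 - 2 * δ) ^ (n - k))⁻¹ := by
        rw [mul_inv, one_div, inv_pow]
    _ ≤ (1 / δ) ^ k * Real.exp k := by
        gcongr
        exact (Real.inv_one_sub_pow_le_exp (by linarith) _).trans (Real.exp_le_exp.2 hm)
    _ = Real.exp (k * (1 + Real.log (1 / δ))) := by
        rw [mul_add, mul_one, Real.exp_add, Real.exp_nat_mul,
          Real.exp_log (one_div_pos.2 hδ0), mul_comm]

end Triadic

theorem gaps_card_and_length_general (δ : ℝ) (hδ0 : 0 < δ) (hδ : δ ≤ 1 / 3)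
    (μ : Measure ℝ) (hμ : ternarySpec δ μ) (n k : ℕ)
    (hk1 : 2 * δ * n ≤ (k : ℝ)) :
    (((gaps (Kset δ μ n k)).ncard : ℝ) ≤ Real.exp ((k : ℝ) * (1 + Real.log (1 / δ)))) ∧
      ∑' I : gaps (Kset δ μ n k), volume (I : Set ℝ) ≤ 1 := by
  have hthreshold : 0 < δ ^ k * (1 - 2 * δ) ^ (n - k) := by
    have : 0 < 1 - 2 * δ := by linarith
    positivity
  refine ⟨?_, ?_⟩
  · calc ((gaps (Kset δ μ n k)).ncard : ℝ) ≤ (goodIdx δ μ n k).ncard := by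
          exact_mod_cast ncard_gaps_biUnion_Ico_le finite_goodIdx
      _ ≤ (δ ^ k * (1 - 2 * δ) ^ (n - k))⁻¹ := by
          rw [← one_div, le_div_iff₀ hthreshold]
          exact ncard_goodIdx_mul_le hμ
      _ ≤ Real.exp (k * (1 + Real.log (1 / δ))) := inv_threshold_le_exp hδ0 (by linarith) hk1
  · simpa using tsum_volume_gaps_le (Kset_subset_Ico.trans Ico_subset_Icc_self)

/-- If `2δn ≤ k ≤ (2/3)n` then the number of gaps of `K(n,k)` is at most
`exp(k(1 + log(1/δ)))` and their total length is at most `1`. -/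
theorem gaps_card_and_length (δ : ℝ) (hδ0 : 0 < δ) (hδ : δ ≤ 1 / 3)
    (μ : Measure ℝ) (hμ : ternarySpec δ μ) (n k : ℕ)
    (hk1 : 2 * δ * n ≤ (k : ℝ)) (hk2 : (k : ℝ) ≤ 2 / 3 * n) :
    (((gaps (Kset δ μ n k)).ncard : ℝ) ≤ Real.exp ((k : ℝ) * (1 + Real.log (1 / δ)))) ∧
      ∑' I : gaps (Kset δ μ n k), volume (I : Set ℝ) ≤ 1 :=
  gaps_card_and_length_general δ hδ0 hδ μ hμ n k hk1
end
end

section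
/- Fix δ ∈ (0,1/3], d ≥ 2 and integers 0 ≤ k ≤ n. With μ, K(n,k), 𝒦^d(n,k) and 𝒢(n,k) as in the triadic construction, define Γ(n,k) = ∪_{Q ∈ 𝒦^d(n,k)} Sk(Q) ∪ ∪_{I_1,…,I_d ∈ 𝒢(n,k)} Sk(I_1×⋯×I_d), where Sk denotes the skeleton of a box. Then Γ(n,k) is a connected subset of ℝ^d. -/
open MeasureTheory Set

noncomputable section

/-- The skeleton of the box `I 0 × ⋯ × I (d-1)`: the union over `j` of the products
`∂I 0 × ⋯ × ∂I (j-1) × I j × ∂I (j+1) × ⋯ × ∂I (d-1)`, i.e. the union of the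
one-dimensional edges of the box. -/
def Sk (d : ℕ) (I : Fin d → Set ℝ) : Set (Fin d → ℝ) :=
  ⋃ j : Fin d, Set.pi Set.univ fun m => if m = j then I m else frontier (I m)

/-- `Γ(n,k)`: the union of the skeletons of the cubes of `𝒦^d(n,k)` together with the
skeletons of all boxes `I₁ × ⋯ × I_d` with each `Iⱼ` a gap of `K(n,k)`. -/
def GammaNK (d : ℕ) (δ : ℝ) (μ : Measure ℝ) (n k : ℕ) : Set (Fin d → ℝ) :=
  (⋃ f ∈ {f : Fin d → ℕ | ∀ j, f j ∈ goodIdx δ μ n k}, Sk d fun j => triIco n (f j)) ∪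
    ⋃ I ∈ {I : Fin d → Set ℝ | ∀ j, I j ∈ gaps (Kset δ μ n k)}, Sk d I

/-!
Write `K` for `K(n,k)`, `E` for the endpoints of its triadic intervals, and `W` for `K` together
with its gaps. A point of `Γ(n,k)` has one free coordinate, in `K` or in a gap, and all others
in `E` or at gap endpoints respectively. Since the gaps fill the holes between the intervals of
`K`, `W` is an interval, so the frame of points with one coordinate in `W` and the others at gap
endpoints is connected, and it lies in `Γ(n,k)`. Any other point is slid along its free coordinate
to an endpoint of its interval; then its other coordinates are slid one at a time through the
closure of `K`, each to a gap endpoint (every component of that closure reaches one), which lands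
the point on the frame. Without gaps `K` itself is an interval and the same argument applies.
-/

open Function

section AxisGrid

variable {ι X : Type*}

def axisGrid (A B : Set X) : Set (ι → X) := {x | ∃ j, x j ∈ A ∧ ∀ m ≠ j, x m ∈ B}

lemma axisGrid_union_left (A₁ A₂ B : Set X) :
    axisGrid (ι := ι) (A₁ ∪ A₂) B = axisGrid A₁ B ∪ axisGrid A₂ B := by
  ext x
  simp [axisGrid, or_and_right, exists_or]

lemma axisGrid_mono {A₁ A₂ B₁ B₂ : Set X} (hA : A₁ ⊆ A₂) (hB : B₁ ⊆ B₂) :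
    axisGrid (ι := ι) A₁ B₁ ⊆ axisGrid A₂ B₂ :=
  fun _ ⟨j, hj, hm⟩ => ⟨j, hA hj, fun m hmj => hB (hm m hmj)⟩

section Update

variable [DecidableEq ι]

lemma update_mem_axisGrid {A B : Set X} {w : ι → X} {m : ι} {t : X} (ht : t ∈ A)
    (hw : ∀ l ≠ m, w l ∈ B) : update w m t ∈ axisGrid A B :=
  ⟨m, by simpa using ht, fun l hl => by simpa [hl] using hw l hl⟩

variable [TopologicalSpace X]

lemma update_mem_connectedComponentIn {S : Set (ι → X)} {T : Set X} (hT : IsPreconnected T)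
    (x : ι → X) (m : ι) {u v : X} (hu : u ∈ T) (hv : v ∈ T) (hS : ∀ t ∈ T, update x m t ∈ S) :
    update x m v ∈ connectedComponentIn S (update x m u) :=
  (hT.image _ (by fun_prop : Continuous (update x m)).continuousOn).subset_connectedComponentIn
    (mem_image_of_mem _ hu) (image_subset_iff.2 hS) (mem_image_of_mem _ hv)

/-- Moving the coordinates from `x` to `z` one at a time, in any order, passes only through points
whose coordinates are taken from `x` or `z`. -/
lemma mem_connectedComponentIn_of_forall_update [Finite ι] {S : Set (ι → X)} {x z : ι → X}
    (hx : x ∈ S)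
    (h : ∀ m, ∃ T, IsPreconnected T ∧ x m ∈ T ∧ z m ∈ T ∧
      ∀ w : ι → X, (∀ l, w l = x l ∨ w l = z l) → ∀ t ∈ T, update w m t ∈ S) :
    z ∈ connectedComponentIn S x := by
  have := Fintype.ofFinite ι
  choose T hT hxT hzT hTS using h
  suffices ∀ s : Finset ι, s.piecewise z x ∈ connectedComponentIn S x by
    simpa using this Finset.univ
  intro s
  induction s using Finset.induction_on with
  | empty => simpa using mem_connectedComponentIn hx
  | insert m s hm ih =>
    set w := s.piecewise z x
    have hmixed : ∀ l, w l = x l ∨ w l = z l := fun l => by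
      by_cases hl : l ∈ s <;> simp [w, hl]
    have hwm : update w m (x m) = w := by simp [w, hm]
    have := update_mem_connectedComponentIn (hT m) w m (hxT m) (hzT m) (hTS m w hmixed)
    rw [hwm] at this
    rw [Finset.piecewise_insert, connectedComponentIn_eq ih]
    exact this

end Update

variable [TopologicalSpace X]

lemma const_mem_connectedComponentIn_axisGrid [Finite ι] {W P : Set X} (hW : IsPreconnected W)
    (hPW : P ⊆ W) {p₀ : X} (hp₀ : p₀ ∈ P) {x : ι → X} (hx : x ∈ axisGrid W P) :
    (fun _ => p₀) ∈ connectedComponentIn (axisGrid W P) x := by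
  classical
  obtain ⟨j, hxj, hxP⟩ := hx
  have h₁ : update x j p₀ ∈ connectedComponentIn (axisGrid W P) x := by
    simpa using update_mem_connectedComponentIn hW x j hxj (hPW hp₀)
      fun t ht => update_mem_axisGrid ht hxP
  have hx'P : ∀ l, update x j p₀ l ∈ P := (forall_update_iff x fun _ y => y ∈ P).2 ⟨hp₀, hxP⟩
  rw [connectedComponentIn_eq h₁]
  refine mem_connectedComponentIn_of_forall_update (update_mem_axisGrid (hPW hp₀) hxP)
    fun m => ⟨W, hW, hPW (hx'P m), hPW hp₀, fun w hw t ht => update_mem_axisGrid ht fun l _ => ?_⟩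
  rcases hw l with h | h <;> rw [h]
  exacts [hx'P l, hp₀]

lemma exists_mem_axisGrid_mem_connectedComponentIn [Finite ι] {A B P : Set X} (hPB : P ⊆ B)
    (hA : ∀ t ∈ A, ∃ b ∈ A ∩ B, b ∈ connectedComponentIn A t)
    (hB : ∀ y ∈ B, ∃ p ∈ P, p ∈ connectedComponentIn (A ∪ B) y) {x : ι → X}
    (hx : x ∈ axisGrid A B) : ∃ y ∈ axisGrid A P, y ∈ connectedComponentIn (axisGrid A B) x := by
  classical
  obtain ⟨j, hxj, hxB⟩ := hx
  obtain ⟨b, ⟨hbA, hbB⟩, hb⟩ := hA _ hxj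
  set x' := update x j b
  have hx'B : ∀ l, x' l ∈ B := (forall_update_iff x fun _ y => y ∈ B).2 ⟨hbB, hxB⟩
  have h₁ : x' ∈ connectedComponentIn (axisGrid A B) x := by
    simpa using update_mem_connectedComponentIn isPreconnected_connectedComponentIn x j
      (mem_connectedComponentIn hxj) hb
      fun t ht => update_mem_axisGrid (connectedComponentIn_subset _ _ ht) hxB
  choose p hpP hp using fun l => hB _ (hx'B l)
  set y := update p j b
  have hyB : ∀ l, y l ∈ B := (forall_update_iff p fun _ y => y ∈ B).2 ⟨hbB, fun l _ => hPB (hpP l)⟩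
  refine ⟨y, update_mem_axisGrid hbA fun l _ => hpP l, ?_⟩
  rw [connectedComponentIn_eq h₁]
  refine mem_connectedComponentIn_of_forall_update (update_mem_axisGrid hbA hxB) fun m => ?_
  have hwB : ∀ w : ι → X, (∀ l, w l = x' l ∨ w l = y l) → ∀ l, w l ∈ B := fun w hw l => by
    rcases hw l with h | h <;> rw [h]
    exacts [hx'B l, hyB l]
  by_cases hmj : m = j
  · subst hmj
    exact ⟨{b}, isPreconnected_singleton, by simp [x'], by simp [y], fun w hw t ht =>
      update_mem_axisGrid ((mem_singleton_iff.1 ht) ▸ hbA) fun l _ => hwB w hw l⟩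
  refine ⟨connectedComponentIn (A ∪ B) (x' m), isPreconnected_connectedComponentIn,
    mem_connectedComponentIn (Or.inr (hx'B m)), by simpa [y, hmj] using hp m,
    fun w hw t ht => ?_⟩
  rcases connectedComponentIn_subset _ _ ht with htA | htB
  · exact update_mem_axisGrid htA fun l _ => hwB w hw l
  -- the `j`-th coordinate stays at `b ∈ A` throughout
  have hwj : w j = b := by rcases hw j with h | h <;> simp [h, x', y]
  refine ⟨j, by simpa [Ne.symm hmj, hwj] using hbA, fun l _ => ?_⟩
  exact (forall_update_iff w fun _ y => y ∈ B).2 ⟨htB, fun l _ => hwB w hw l⟩ l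

theorem isPreconnected_axisGrid_union [Finite ι] {A B W P : Set X} (hW : IsPreconnected W)
    (hAW : A ⊆ W) (hPW : P ⊆ W) (hPB : P ⊆ B) (hP : P.Nonempty)
    (hA : ∀ t ∈ A, ∃ b ∈ A ∩ B, b ∈ connectedComponentIn A t)
    (hB : ∀ y ∈ B, ∃ p ∈ P, p ∈ connectedComponentIn (A ∪ B) y) :
    IsPreconnected (axisGrid (ι := ι) A B ∪ axisGrid W P) := by
  obtain ⟨p₀, hp₀⟩ := hP
  set S := axisGrid (ι := ι) A B ∪ axisGrid W P
  have frame : ∀ x ∈ axisGrid W P, (fun _ => p₀) ∈ connectedComponentIn S x := fun x hx =>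
    connectedComponentIn_mono _ subset_union_right
      (const_mem_connectedComponentIn_axisGrid hW hPW hp₀ hx)
  have hS : ∀ x ∈ S, (fun _ => p₀) ∈ connectedComponentIn S x := by
    rintro x (hx | hx)
    · obtain ⟨y, hy, hyx⟩ := exists_mem_axisGrid_mem_connectedComponentIn hPB hA hB hx
      rw [connectedComponentIn_eq (connectedComponentIn_mono _ subset_union_left hyx)]
      exact frame y (axisGrid_mono hAW subset_rfl hy)
    · exact frame x hx
  exact isPreconnected_of_forall _ fun y hy => ⟨connectedComponentIn S y,
    connectedComponentIn_subset _ _, hS y hy, mem_connectedComponentIn hy,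
    isPreconnected_connectedComponentIn⟩

end AxisGrid

section Gaps

variable {X : Type*} [TopologicalSpace X]

lemma frontier_connectedComponentIn_compl_subset [LocallyConnectedSpace X] (K : Set X) (x : X) :
    frontier (connectedComponentIn Kᶜ x) ⊆ frontier K := by
  intro z hz
  rw [frontier_eq_closure_inter_closure]
  refine ⟨?_, closure_mono (connectedComponentIn_subset _ _) hz.1⟩
  by_contra hzK
  set V := connectedComponentIn (closure K)ᶜ z
  have hVo : IsOpen V := isClosed_closure.isOpen_compl.connectedComponentIn
  have hzV : z ∈ V := mem_connectedComponentIn hzK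
  obtain ⟨w, hwV, hwU⟩ := mem_closure_iff.1 hz.1 V hVo hzV
  have hVU : V ⊆ connectedComponentIn Kᶜ x := by
    rw [connectedComponentIn_eq hwU]
    exact isPreconnected_connectedComponentIn.subset_connectedComponentIn hwV
      ((connectedComponentIn_subset _ _).trans (compl_subset_compl.2 subset_closure))
  exact hz.2 (interior_maximal hVU hVo hzV)

lemma frontier_connectedComponentIn_compl_subset_union (K : Set X) (x : X) :
    frontier (connectedComponentIn Kᶜ x) ⊆ K ∪ connectedComponentIn Kᶜ x := by
  intro z hz
  refine or_iff_not_imp_left.2 fun hzK => ?_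
  have hx : x ∈ Kᶜ := connectedComponentIn_nonempty_iff.1 (closure_nonempty_iff.1 ⟨z, hz.1⟩)
  have hpre : IsPreconnected (insert z (connectedComponentIn Kᶜ x)) :=
    isPreconnected_connectedComponentIn.subset_closure (subset_insert _ _)
      (insert_subset hz.1 subset_closure)
  exact hpre.subset_connectedComponentIn (mem_insert_of_mem _ (mem_connectedComponentIn hx))
    (insert_subset hzK (connectedComponentIn_subset _ _)) (mem_insert _ _)

lemma Set.Finite.frontier_biUnion_subset {κ : Type*} {s : Set κ} (hs : s.Finite)
    (f : κ → Set X) : frontier (⋃ i ∈ s, f i) ⊆ ⋃ i ∈ s, frontier (f i) := by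
  rintro z ⟨hzc, hzi⟩
  rw [hs.closure_biUnion] at hzc
  obtain ⟨i, hi, hz⟩ := mem_iUnion₂.1 hzc
  exact mem_biUnion hi ⟨hz, fun h => hzi (interior_mono (subset_biUnion_of_mem hi) h)⟩

def fillGaps (K : Set ℝ) : Set ℝ := K ∪ ⋃ U ∈ gaps K, U

def gapEnds (K : Set ℝ) : Set ℝ := ⋃ U ∈ gaps K, frontier U

variable {K : Set ℝ}

lemma exists_lt_mem_and_exists_mem_gt {x : ℝ} (hx : x ∉ K)
    (hb : Bornology.IsBounded (connectedComponentIn Kᶜ x)) :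
    (∃ t ∈ K, t < x) ∧ ∃ t ∈ K, x < t := by
  constructor <;> by_contra! h
  · exact not_bddBelow_Iic x (hb.bddBelow.mono (isPreconnected_Iic.subset_connectedComponentIn
      self_mem_Iic fun t ht htK => hx (le_antisymm ht (h t htK) ▸ htK)))
  · exact not_bddAbove_Ici x (hb.bddAbove.mono (isPreconnected_Ici.subset_connectedComponentIn
      self_mem_Ici fun t ht htK => hx (le_antisymm (h t htK) ht ▸ htK)))

lemma mem_iUnion_gaps_iff {x : ℝ} :
    (x ∈ ⋃ U ∈ gaps K, U) ↔ x ∉ K ∧ Bornology.IsBounded (connectedComponentIn Kᶜ x) := by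
  refine ⟨fun hx => ?_, fun ⟨hxK, hb⟩ =>
    mem_biUnion ⟨hb, x, hxK, rfl⟩ (mem_connectedComponentIn hxK)⟩
  obtain ⟨U, ⟨hU, y, -, rfl⟩, hxU⟩ := mem_iUnion₂.1 hx
  exact ⟨connectedComponentIn_subset _ _ hxU, by rwa [← connectedComponentIn_eq hxU]⟩

lemma mem_fillGaps_iff {x : ℝ} :
    x ∈ fillGaps K ↔ x ∈ K ∨ Bornology.IsBounded (connectedComponentIn Kᶜ x) := by
  rw [fillGaps, mem_union, mem_iUnion_gaps_iff]
  tauto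

lemma ordConnected_fillGaps (K : Set ℝ) : (fillGaps K).OrdConnected := by
  refine ⟨fun x hx y hy t ht => mem_fillGaps_iff.2 (or_iff_not_imp_left.2 fun htK => ?_)⟩
  have hC : (connectedComponentIn Kᶜ t).OrdConnected :=
    isPreconnected_connectedComponentIn.ordConnected
  have htC : t ∈ connectedComponentIn Kᶜ t := mem_connectedComponentIn htK
  by_cases hxC : x ∈ connectedComponentIn Kᶜ t
  · rw [connectedComponentIn_eq hxC]
    exact (mem_fillGaps_iff.1 hx).resolve_left (connectedComponentIn_subset _ _ hxC)
  by_cases hyC : y ∈ connectedComponentIn Kᶜ t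
  · rw [connectedComponentIn_eq hyC]
    exact (mem_fillGaps_iff.1 hy).resolve_left (connectedComponentIn_subset _ _ hyC)
  refine (Metric.isBounded_Icc x y).subset fun u hu => ⟨?_, ?_⟩
  · by_contra! hux
    exact hxC (hC.out hu htC ⟨hux.le, ht.1⟩)
  · by_contra! hyu
    exact hyC (hC.out htC hu ⟨ht.2, hyu.le⟩)

lemma isPreconnected_of_gaps_eq_empty (h : gaps K = ∅) : IsPreconnected K := by
  simpa [fillGaps, h] using (ordConnected_fillGaps K).isPreconnected

lemma gapEnds_subset_frontier : gapEnds K ⊆ frontier K :=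
  iUnion₂_subset fun _ ⟨_, x, _, hU⟩ => hU ▸ frontier_connectedComponentIn_compl_subset K x

lemma gapEnds_subset_fillGaps : gapEnds K ⊆ fillGaps K := by
  refine iUnion₂_subset fun U hU z hz => ?_
  rcases hU with ⟨hb, x, hx, rfl⟩
  exact (frontier_connectedComponentIn_compl_subset_union K x hz).imp_right
    fun hzU => mem_biUnion ⟨hb, x, hx, rfl⟩ hzU

end Gaps

section Cells

variable {e : ℕ → ℝ} {G : Set ℕ}

def cell (e : ℕ → ℝ) (i : ℕ) : Set ℝ := Ico (e i) (e (i + 1))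

def cellUnion (e : ℕ → ℝ) (G : Set ℕ) : Set ℝ := ⋃ i ∈ G, cell e i

def cellEnds (e : ℕ → ℝ) (G : Set ℕ) : Set ℝ := ⋃ i ∈ G, frontier (cell e i)

def IsHole (G : Set ℕ) (c : ℕ) : Prop := c ∉ G ∧ (∃ g ∈ G, g < c) ∧ ∃ g ∈ G, c < g

lemma isPreconnected_cell (i : ℕ) : IsPreconnected (cell e i) := isPreconnected_Ico

lemma mem_cellUnion {i : ℕ} (hi : i ∈ G) {t : ℝ} (ht : t ∈ cell e i) : t ∈ cellUnion e G :=
  mem_biUnion hi ht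

lemma closure_cellUnion_subset (hG : G.Finite) :
    closure (cellUnion e G) ⊆ cellUnion e G ∪ cellEnds e G := by
  rw [closure_eq_self_union_frontier]
  exact union_subset_union_right _ (hG.frontier_biUnion_subset _)

lemma cellEnds_subset_closure : cellEnds e G ⊆ closure (cellUnion e G) :=
  iUnion₂_subset fun _ hi =>
    frontier_subset_closure.trans (closure_mono (subset_biUnion_of_mem (u := cell e) hi))

lemma gapEnds_cellUnion_subset (hG : G.Finite) : gapEnds (cellUnion e G) ⊆ cellEnds e G :=
  gapEnds_subset_frontier.trans (hG.frontier_biUnion_subset _)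

variable (he : StrictMono e)
include he

lemma left_mem_cell (i : ℕ) : e i ∈ cell e i := left_mem_Ico.2 (he i.lt_succ_self)

lemma closure_cell (i : ℕ) : closure (cell e i) = Icc (e i) (e (i + 1)) :=
  closure_Ico (he i.lt_succ_self).ne

lemma left_mem_frontier_cell (i : ℕ) : e i ∈ frontier (cell e i) := by
  rw [cell, frontier_Ico (he i.lt_succ_self)]
  exact mem_insert _ _

lemma eq_of_mem_cell {i j : ℕ} {t : ℝ} (hi : t ∈ cell e i) (hj : t ∈ cell e j) : i = j := by
  have h₁ := he.lt_iff_lt.1 (hi.1.trans_lt hj.2)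
  have h₂ := he.lt_iff_lt.1 (hj.1.trans_lt hi.2)
  omega

lemma cell_subset_compl {c : ℕ} (hc : c ∉ G) : cell e c ⊆ (cellUnion e G)ᶜ := fun t ht htK => by
  obtain ⟨i, hi, hti⟩ := mem_iUnion₂.1 htK
  exact hc (eq_of_mem_cell he hti ht ▸ hi)

lemma exists_mem_cell {a b : ℕ} {t : ℝ} (hat : e a ≤ t) (htb : t < e b) :
    ∃ c, a ≤ c ∧ c < b ∧ t ∈ cell e c := by
  induction b with
  | zero => exact absurd (he.lt_iff_lt.1 (hat.trans_lt htb)) (Nat.not_lt_zero a)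
  | succ b ih =>
    by_cases h : t < e b
    · obtain ⟨c, hac, hcb, hc⟩ := ih h
      exact ⟨c, hac, hcb.trans b.lt_succ_self, hc⟩
    · exact ⟨b, Nat.lt_succ_iff.1 (he.lt_iff_lt.1 (hat.trans_lt htb)), b.lt_succ_self,
        not_lt.1 h, htb⟩

lemma exists_isHole_of_mem_gaps {U : Set ℝ} (hU : U ∈ gaps (cellUnion e G)) : ∃ c, IsHole G c := by
  obtain ⟨hb, x, hx, rfl⟩ := hU
  obtain ⟨⟨s, hsK, hsx⟩, t, htK, hxt⟩ := exists_lt_mem_and_exists_mem_gt hx hb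
  obtain ⟨g₁, hg₁, hs⟩ := mem_iUnion₂.1 hsK
  obtain ⟨g₂, hg₂, ht⟩ := mem_iUnion₂.1 htK
  have h₁ : e (g₁ + 1) ≤ x := not_lt.1 fun h => hx (mem_cellUnion hg₁ ⟨hs.1.trans hsx.le, h⟩)
  have h₂ : x < e g₂ := not_le.1 fun h => hx (mem_cellUnion hg₂ ⟨h, hxt.trans ht.2⟩)
  obtain ⟨c, hc₁, hc₂, hxc⟩ := exists_mem_cell he h₁ h₂
  exact ⟨c, fun hc => hx (mem_cellUnion hc hxc), ⟨g₁, hg₁, hc₁⟩, g₂, hg₂, hc₂⟩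

lemma IsHole.connectedComponentIn_mem_gaps {c : ℕ} (hc : IsHole G c) :
    connectedComponentIn (cellUnion e G)ᶜ (e c) ∈ gaps (cellUnion e G) := by
  obtain ⟨hcG, ⟨g₁, hg₁, h₁⟩, g₂, hg₂, h₂⟩ := hc
  have hcK := cell_subset_compl he hcG (left_mem_cell he c)
  have hU := (isPreconnected_connectedComponentIn (F := (cellUnion e G)ᶜ) (x := e c)).ordConnected
  have hcU := mem_connectedComponentIn hcK
  have hK : ∀ g ∈ G, e g ∉ connectedComponentIn (cellUnion e G)ᶜ (e c) := fun g hg hgU =>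
    connectedComponentIn_subset _ _ hgU (mem_cellUnion hg (left_mem_cell he g))
  refine ⟨(Metric.isBounded_Icc (e g₁) (e g₂)).subset fun u hu => ⟨?_, ?_⟩, e c, hcK, rfl⟩
  · by_contra! h
    exact hK g₁ hg₁ (hU.out hu hcU ⟨h.le, (he h₁).le⟩)
  · by_contra! h
    exact hK g₂ hg₂ (hU.out hcU hu ⟨(he h₂).le, h.le⟩)

lemma IsHole.mem_gapEnds {c : ℕ} (hc : IsHole G c) {z : ℝ} (hzc : z ∈ closure (cell e c))
    (hzK : z ∈ closure (cellUnion e G)) : z ∈ gapEnds (cellUnion e G) := by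
  have hcU : cell e c ⊆ connectedComponentIn (cellUnion e G)ᶜ (e c) :=
    (isPreconnected_cell c).subset_connectedComponentIn (left_mem_cell he c)
      (cell_subset_compl he hc.1)
  refine mem_biUnion (hc.connectedComponentIn_mem_gaps he) ⟨closure_mono hcU hzc, fun hzi => ?_⟩
  have := interior_mono (connectedComponentIn_subset _ _) hzi
  rw [interior_compl] at this
  exact this hzK

lemma closure_cell_subset_connectedComponentIn {i : ℕ} (hi : i ∈ G) :
    closure (cell e i) ⊆ connectedComponentIn (closure (cellUnion e G)) (e i) :=
  (isPreconnected_cell i).closure.subset_connectedComponentIn (subset_closure (left_mem_cell he i))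
    (closure_mono (subset_biUnion_of_mem (u := cell e) hi))

lemma exists_connectedComponentIn_closure_eq {y : ℝ} (hy : y ∈ cellEnds e G) :
    ∃ i ∈ G, connectedComponentIn (closure (cellUnion e G)) y =
      connectedComponentIn (closure (cellUnion e G)) (e i) := by
  obtain ⟨i, hi, hyi⟩ := mem_iUnion₂.1 hy
  exact ⟨i, hi, (connectedComponentIn_eq
    (closure_cell_subset_connectedComponentIn he hi (frontier_subset_closure hyi))).symm⟩

lemma exists_mem_cellEnds_mem_connectedComponentIn {t : ℝ} (ht : t ∈ cellUnion e G) :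
    ∃ b ∈ cellUnion e G ∩ cellEnds e G, b ∈ connectedComponentIn (cellUnion e G) t := by
  obtain ⟨i, hi, hti⟩ := mem_iUnion₂.1 ht
  exact ⟨e i, ⟨mem_cellUnion hi (left_mem_cell he i), mem_biUnion hi (left_mem_frontier_cell he i)⟩,
    (isPreconnected_cell i).subset_connectedComponentIn hti (subset_biUnion_of_mem (u := cell e) hi)
      (left_mem_cell he i)⟩

/-- Walk from cell `i` towards the hole `c₀` through consecutive cells of `G`; the first missing
index on the way is a hole, and the point where the walk stops is one of its ends. -/
lemma IsHole.exists_mem_gapEnds {c₀ : ℕ} (hc₀ : IsHole G c₀) {i : ℕ} (hi : i ∈ G) :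
    ∃ p ∈ gapEnds (cellUnion e G), p ∈ connectedComponentIn (closure (cellUnion e G)) (e i) := by
  obtain ⟨hc₀G, ⟨g₁, hg₁, h₁⟩, g₂, hg₂, h₂⟩ := hc₀
  set L := closure (cellUnion e G)
  have right_mem : ∀ {i}, i ∈ G → e (i + 1) ∈ connectedComponentIn L (e i) := fun {i} hi =>
    closure_cell_subset_connectedComponentIn he hi
      (by rw [closure_cell he]; exact right_mem_Icc.2 (he i.lt_succ_self).le)
  rcases lt_or_gt_of_ne (ne_of_mem_of_not_mem hi hc₀G) with hlt | hgt
  · refine Nat.decreasingInduction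
      (motive := fun i _ => i ∈ G → ∃ p ∈ gapEnds (cellUnion e G), p ∈ connectedComponentIn L (e i))
      (fun i hic ih hiG => ?_) (fun h => absurd h hc₀G) hlt.le hi
    by_cases h : i + 1 ∈ G
    · obtain ⟨p, hp, hpc⟩ := ih h
      exact ⟨p, hp, by rwa [connectedComponentIn_eq (right_mem hiG)]⟩
    · have hole : IsHole G (i + 1) := ⟨h, ⟨i, hiG, i.lt_succ_self⟩, g₂, hg₂, by omega⟩
      exact ⟨_, hole.mem_gapEnds he (subset_closure (left_mem_cell he _))
        (connectedComponentIn_subset _ _ (right_mem hiG)), right_mem hiG⟩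
  · refine Nat.le_induction
      (P := fun i _ => i ∈ G → ∃ p ∈ gapEnds (cellUnion e G), p ∈ connectedComponentIn L (e i))
      (fun h => absurd h hc₀G) (fun i hci ih hiG => ?_) i hgt.le hi
    by_cases h : i ∈ G
    · obtain ⟨p, hp, hpc⟩ := ih h
      exact ⟨p, hp, by rwa [← connectedComponentIn_eq (right_mem h)]⟩
    · have hole : IsHole G i := ⟨h, ⟨g₁, hg₁, by omega⟩, i + 1, hiG, i.lt_succ_self⟩
      have hL : e (i + 1) ∈ L := subset_closure (mem_cellUnion hiG (left_mem_cell he _))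
      refine ⟨_, hole.mem_gapEnds he ?_ hL, mem_connectedComponentIn hL⟩
      rw [closure_cell he]
      exact right_mem_Icc.2 (he i.lt_succ_self).le

end Cells

theorem isConnected_axisGrid_cellUnion {ι : Type*} [Finite ι] [Nonempty ι] {e : ℕ → ℝ}
    {G : Set ℕ} (he : StrictMono e) (hG : G.Finite) (hne : G.Nonempty) :
    IsConnected (axisGrid (ι := ι) (cellUnion e G) (cellEnds e G) ∪
      axisGrid (⋃ U ∈ gaps (cellUnion e G), U) (gapEnds (cellUnion e G))) := by
  set K := cellUnion e G
  set E := cellEnds e G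
  obtain ⟨i₀, hi₀⟩ := hne
  have hi₀K : e i₀ ∈ K := mem_cellUnion hi₀ (left_mem_cell he i₀)
  have hi₀E : e i₀ ∈ E := mem_biUnion hi₀ (left_mem_frontier_cell he i₀)
  have hA := fun t (ht : t ∈ K) => exists_mem_cellEnds_mem_connectedComponentIn he ht
  have hgE : gapEnds K ⊆ E := gapEnds_cellUnion_subset hG
  refine ⟨⟨fun _ => e i₀, Or.inl ⟨Classical.arbitrary ι, hi₀K, fun _ _ => hi₀E⟩⟩, ?_⟩
  rcases (gaps K).eq_empty_or_nonempty with hgaps | ⟨U, hU⟩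
  · have hK := isPreconnected_of_gaps_eq_empty hgaps
    have hB : ∀ y ∈ E, ∃ p ∈ ({e i₀} : Set ℝ), p ∈ connectedComponentIn (K ∪ E) y := fun y hy =>
      ⟨e i₀, rfl, connectedComponentIn_mono _ (closure_cellUnion_subset hG)
        (hK.closure.subset_connectedComponentIn (cellEnds_subset_closure hy) subset_rfl
          (subset_closure hi₀K))⟩
    have := isPreconnected_axisGrid_union (ι := ι) hK subset_rfl (singleton_subset_iff.2 hi₀K)
      (singleton_subset_iff.2 hi₀E) (singleton_nonempty _) hA hB
    rw [hgaps, biUnion_empty, union_eq_left.2 (axisGrid_mono (empty_subset K) hgE)]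
    rwa [union_eq_left.2 (axisGrid_mono subset_rfl (singleton_subset_iff.2 hi₀E))] at this
  · obtain ⟨c₀, hc₀⟩ := exists_isHole_of_mem_gaps he hU
    have hB : ∀ y ∈ E, ∃ p ∈ gapEnds K, p ∈ connectedComponentIn (K ∪ E) y := fun y hy => by
      obtain ⟨i, hi, hyi⟩ := exists_connectedComponentIn_closure_eq he hy
      obtain ⟨p, hp, hpi⟩ := hc₀.exists_mem_gapEnds he hi
      exact ⟨p, hp, connectedComponentIn_mono _ (closure_cellUnion_subset hG) (hyi ▸ hpi)⟩
    obtain ⟨p₀, hp₀, -⟩ := hB _ hi₀E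
    have := isPreconnected_axisGrid_union (ι := ι) (ordConnected_fillGaps K).isPreconnected
      subset_union_left gapEnds_subset_fillGaps hgE ⟨p₀, hp₀⟩ hA hB
    rwa [fillGaps, axisGrid_union_left, ← union_assoc,
      union_eq_left.2 (axisGrid_mono subset_rfl hgE)] at this

section Triadic

def triadicPoint (n i : ℕ) : ℝ := i / 3 ^ n

lemma strictMono_triadicPoint (n : ℕ) : StrictMono (triadicPoint n) :=
  fun _ _ h => div_lt_div_of_pos_right (Nat.cast_lt.2 h) (by positivity)

lemma triIco_eq_cell (n i : ℕ) : triIco n i = cell (triadicPoint n) i := by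
  simp [triIco, cell, triadicPoint]

lemma Kset_eq_cellUnion (δ : ℝ) (μ : Measure ℝ) (n k : ℕ) :
    Kset δ μ n k = cellUnion (triadicPoint n) (goodIdx δ μ n k) := by
  simp only [Kset, cellUnion, triIco_eq_cell]

lemma biUnion_Sk_eq_axisGrid {d : ℕ} {κ : Type*} (s : κ → Set ℝ) (G : Set κ) :
    ⋃ f ∈ {f : Fin d → κ | ∀ j, f j ∈ G}, Sk d (fun j => s (f j)) =
      axisGrid (⋃ i ∈ G, s i) (⋃ i ∈ G, frontier (s i)) := by
  ext x
  simp only [Sk, mem_iUnion, mem_univ_pi, exists_prop]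
  constructor
  · rintro ⟨f, hf, j, hx⟩
    exact ⟨j, mem_biUnion (hf j) (by simpa using hx j),
      fun m hm => mem_biUnion (hf m) (by simpa [hm] using hx m)⟩
  · rintro ⟨j, hj, hm⟩
    have : ∀ m, ∃ i ∈ G, x m ∈ if m = j then s i else frontier (s i) := fun m => by
      by_cases h : m = j
      · subst h
        simpa using mem_iUnion₂.1 hj
      · simpa [h] using mem_iUnion₂.1 (hm m h)
    choose f hf hx using this
    exact ⟨f, hf, j, hx⟩

lemma GammaNK_eq (d : ℕ) (δ : ℝ) (μ : Measure ℝ) (n k : ℕ) :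
    GammaNK d δ μ n k =
      axisGrid (cellUnion (triadicPoint n) (goodIdx δ μ n k))
          (cellEnds (triadicPoint n) (goodIdx δ μ n k)) ∪
        axisGrid (⋃ U ∈ gaps (cellUnion (triadicPoint n) (goodIdx δ μ n k)), U)
          (gapEnds (cellUnion (triadicPoint n) (goodIdx δ μ n k))) := by
  simp only [GammaNK, Kset_eq_cellUnion, triIco_eq_cell]
  rw [biUnion_Sk_eq_axisGrid]
  congr 1
  exact biUnion_Sk_eq_axisGrid id _

lemma ternaryOnes_ofDigits_replicate (n : ℕ) :
    ternaryOnes (Nat.ofDigits 3 (List.replicate n 1)) = n := by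
  rw [ternaryOnes, Nat.digits_ofDigits 3 (by norm_num) _ (by simp) (by simp)]
  simp

lemma mul_pow_sub_le_pow {δ : ℝ} (hδ0 : 0 ≤ δ) (hδ : δ ≤ 1 / 3) (n k : ℕ) :
    δ ^ k * (1 - 2 * δ) ^ (n - k) ≤ (1 - 2 * δ) ^ n :=
  calc δ ^ k * (1 - 2 * δ) ^ (n - k) ≤ (1 - 2 * δ) ^ k * (1 - 2 * δ) ^ (n - k) :=
        mul_le_mul_of_nonneg_right (pow_le_pow_left₀ hδ0 (by linarith) k)
          (pow_nonneg (by linarith) _)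
    _ = (1 - 2 * δ) ^ (k + (n - k)) := (pow_add _ _ _).symm
    _ ≤ (1 - 2 * δ) ^ n := pow_le_pow_of_le_one (by linarith) (by linarith) (by omega)

/-- The witness is the central interval of generation `n` (all ternary digits `1`), of mass
`(1 - 2δ) ^ n`. -/
lemma ofDigits_replicate_mem_goodIdx {δ : ℝ} (hδ0 : 0 ≤ δ) (hδ : δ ≤ 1 / 3) {μ : Measure ℝ}
    (hμ : ternarySpec δ μ) (n k : ℕ) :
    Nat.ofDigits 3 (List.replicate n 1) ∈ goodIdx δ μ n k := by
  have hlt : Nat.ofDigits 3 (List.replicate n 1) < 3 ^ n := by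
    simpa using Nat.ofDigits_lt_base_pow_length (b := 3) (l := List.replicate n 1) (by norm_num)
      (by simp)
  have hmass := hμ 0 n _ hlt
  simp only [Int.cast_zero, zero_add, ternaryOnes_ofDigits_replicate, Nat.sub_self, pow_zero,
    one_mul] at hmass
  refine ⟨hlt, ?_⟩
  rw [triIco, hmass]
  exact ENNReal.ofReal_le_ofReal (mul_pow_sub_le_pow hδ0 hδ n k)

end Triadic

theorem GammaNK_isConnected_general (d : ℕ) (hd : 2 ≤ d) (δ : ℝ) (hδ0 : 0 < δ) (hδ : δ ≤ 1 / 3)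
    (μ : Measure ℝ) (hμ : ternarySpec δ μ) (n k : ℕ) :
    IsConnected (GammaNK d δ μ n k) := by
  have : Nonempty (Fin d) := ⟨⟨0, by omega⟩⟩
  rw [GammaNK_eq]
  exact isConnected_axisGrid_cellUnion (strictMono_triadicPoint n)
    ((finite_Iio (3 ^ n)).subset fun _ hi => hi.1)
    ⟨_, ofDigits_replicate_mem_goodIdx hδ0.le hδ hμ n k⟩

/-- The set `Γ(n,k)` is a connected subset of `ℝ^d`. -/
theorem GammaNK_isConnected (d : ℕ) (hd : 2 ≤ d) (δ : ℝ) (hδ0 : 0 < δ) (hδ : δ ≤ 1 / 3)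
    (μ : Measure ℝ) (hμ : ternarySpec δ μ) (n k : ℕ) (hkn : k ≤ n) :
    IsConnected (GammaNK d δ μ n k) :=
  GammaNK_isConnected_general d hd δ hδ0 hδ μ hμ n k
end
end
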